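/- arXiv:1903.06955 — 5 statements merged into one kernel-verified Lean document; each statement's English description precedes it below -/
import Mathlib

section
/- Let X ⊆ ℝ^d be a nonempty closed set with reach at least τ > 0 (every z with infDist(z, X) < τ has a unique nearest point in X). Let x_1, …, x_k ∈ ℝ^d with radii r_1, …, r_k > 0 satisfying √(2d/(d+1)) · r_i ≤ τ − d_X(x_i) for each i, and suppose ‖x_i − x_j‖ < r_i + r_j for all i, j. Then there exists a point p ∈ X such that ‖x_i − p‖ < √((4d/(d+1)) r_i² + d_X(x_i)(2τ − d_X(x_i))) for all i. (Equivalently: every simplex of the Rips complex Rips(𝒳, r) with such radii belongs to the restricted Čech complex Čech_X(𝒳, r'') with r''_x = √((4d/(d+1)) r_x² + d_X(x)(2τ − d_X(x))).) -/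
set_option maxHeartbeats 1000000

open Metric Set Filter
open scoped RealInnerProductSpace Topology

section Helpers

variable {E : Type*} [NormedAddCommGroup E] [InnerProductSpace ℝ E] [ProperSpace E]

lemma expand_sq (p y u : E) (hu : ‖u‖ = 1) (σ : ℝ) :
    ‖p + σ • u - y‖ ^ 2 = ‖p - y‖ ^ 2 + 2 * σ * ⟪u, p - y⟫ + σ ^ 2 := by
  have h : p + σ • u - y = (p - y) + σ • u := by abel
  rw [h, norm_add_sq_real, real_inner_smul_right, norm_smul]
  simp [hu, real_inner_comm]
  ring

lemma rolling {X : Set E} (hXne : X.Nonempty) (hXcl : IsClosed X) {τ : ℝ}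
    (hreach : ∀ z : E, Metric.infDist z X < τ →
      ∃! p, p ∈ X ∧ dist z p = Metric.infDist z X)
    (c p : E) (hp : p ∈ X) (hdist : dist c p = Metric.infDist c X)
    (hδ : 0 < Metric.infDist c X) {t' : ℝ} (h1 : Metric.infDist c X < t') (h2 : t' < τ) :
    Metric.infDist (p + (t' / Metric.infDist c X) • (c - p)) X = t' := by
  classical
  set g : E → ℝ := fun w => Metric.infDist w X with hg
  have gcont : Continuous g := continuous_infDist_pt X
  have glip : ∀ w w' : E, g w ≤ g w' + dist w w' := fun w w' =>
    infDist_le_infDist_add_dist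
  set δ := g c with hδdef
  set M : ℝ → ℝ := fun t => sSup (g '' closedBall c t) with hM
  have attain : ∀ t : ℝ, 0 ≤ t → ∃ w, dist w c ≤ t ∧ g w = M t ∧
      ∀ w', dist w' c ≤ t → g w' ≤ M t := by
    intro t ht
    obtain ⟨w, hwmem, hwmax⟩ := (isCompact_closedBall c t).exists_isMaxOn
      ⟨c, mem_closedBall_self ht⟩ gcont.continuousOn
    have hgr : IsGreatest (g '' closedBall c t) (g w) :=
      ⟨⟨w, hwmem, rfl⟩, by rintro q ⟨w', hw', rfl⟩; exact hwmax hw'⟩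
    have hMt : M t = g w := hgr.csSup_eq
    exact ⟨w, mem_closedBall.mp hwmem, hMt.symm,
      fun w' hw' => hMt ▸ hwmax (mem_closedBall.mpr hw')⟩
  have M0 : M 0 = δ := by
    simp only [hM, closedBall_zero, image_singleton, csSup_singleton]; rfl
  have Mmono : ∀ a b : ℝ, 0 ≤ a → a ≤ b → M a ≤ M b := by
    intro a b ha hab
    obtain ⟨w, hw1, hw2, _⟩ := attain a ha
    obtain ⟨w2, _, hw22, hmax⟩ := attain b (ha.trans hab)
    rw [← hw2]; exact hmax w (hw1.trans hab)
  have Mle : ∀ t, 0 ≤ t → M t ≤ δ + t := by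
    intro t ht
    obtain ⟨w, hw1, hw2, _⟩ := attain t ht
    have h := glip w c
    rw [← hw2] at *
    linarith
  have Mlip : ∀ a b : ℝ, 0 ≤ a → a ≤ b → M b ≤ M a + (b - a) := by
    intro a b ha hab
    rcases eq_or_lt_of_le (ha.trans hab) with hb0 | hb0
    · have hab0 : a = 0 := le_antisymm (hab.trans hb0.symm.le) ha
      rw [← hb0, hab0]; simp
    obtain ⟨w, hw1, hw2, _⟩ := attain b (ha.trans hab)
    obtain ⟨w2, hw21, hw22, hmax⟩ := attain a ha
    set w' := c + (a / b) • (w - c) with hw'def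
    have hab' : 0 ≤ a / b := div_nonneg ha hb0.le
    have hab'' : a / b ≤ 1 := (div_le_one hb0).mpr hab
    have hwc : ‖w - c‖ ≤ b := by rw [← dist_eq_norm]; exact hw1
    have hdist1 : dist w' c ≤ a := by
      rw [dist_eq_norm, hw'def]
      simp only [add_sub_cancel_left, norm_smul, Real.norm_eq_abs, abs_of_nonneg hab']
      calc a / b * ‖w - c‖ ≤ a / b * b := by
            exact mul_le_mul_of_nonneg_left hwc hab'
        _ = a := by field_simp
    have hdist2 : dist w w' ≤ b - a := by
      have hww' : w - w' = (1 - a / b) • (w - c) := by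
        rw [hw'def]; rw [sub_smul, one_smul]; abel
      rw [dist_eq_norm, hww', norm_smul, Real.norm_eq_abs, abs_of_nonneg (by linarith)]
      calc (1 - a / b) * ‖w - c‖ ≤ (1 - a / b) * b :=
            mul_le_mul_of_nonneg_left hwc (by linarith)
        _ = b - a := by field_simp
    calc M b = g w := hw2.symm
      _ ≤ g w' + dist w w' := glip w w'
      _ ≤ M a + (b - a) := add_le_add (hmax w' hdist1) hdist2
  -- the key differential estimate
  have EV : ∀ x θ : ℝ, 0 ≤ x → x + δ < t' → 0 ≤ θ → θ < 1 →
      ∀ᶠ z in 𝓝[>] x, θ * (z - x) < M z - M x := by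
    intro x θ hx hxL hθ0 hθ1
    by_contra hcon
    rw [Filter.not_eventually] at hcon
    obtain ⟨zs, hzs_tendsto, hzs⟩ := Filter.exists_seq_forall_of_frequently hcon
    have hev : ∀ᶠ n in atTop, zs n ∈ Ioo x (x + 1) :=
      hzs_tendsto (Ioo_mem_nhdsGT_of_mem ⟨le_rfl, lt_add_one x⟩)
    obtain ⟨N, hN⟩ := eventually_atTop.mp hev
    set m := M x with hm
    have hmδ : δ ≤ m := by rw [← M0]; exact Mmono 0 x le_rfl hx
    have hm0 : 0 < m := lt_of_lt_of_le hδ hmδ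
    have hmτ : m < τ := by
      have := Mle x hx
      linarith
    obtain ⟨w, hwc, hwM, _⟩ := attain x hx
    obtain ⟨p', hp'X, hp'd⟩ := hXcl.exists_infDist_eq_dist hXne w
    have hmeq : Metric.infDist w X = m := by rw [hm, ← hwM]
    have hwp' : dist w p' = m := by rw [← hp'd]; exact hmeq
    set u' : E := (m)⁻¹ • (w - p') with hu'def
    have hwp'norm : ‖w - p'‖ = m := by rw [← dist_eq_norm]; exact hwp'
    have hu'norm : ‖u'‖ = 1 := by
      rw [hu'def, norm_smul, hwp'norm, Real.norm_eq_abs, abs_of_pos (inv_pos.mpr hm0)]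
      field_simp
    have hw_eq : w = p' + m • u' := by
      rw [hu'def, smul_smul, mul_inv_cancel₀ hm0.ne', one_smul]; abel
    set ε : ℕ → ℝ := fun n => zs (n + N) - x with hε
    have hε_pos : ∀ n, 0 < ε n := fun n => sub_pos.mpr (hN _ (Nat.le_add_left N n)).1
    have hε_le1 : ∀ n, ε n ≤ 1 := fun n => by
      have := (hN _ (Nat.le_add_left N n)).2; simp only [hε]; linarith
    have hε_tendsto : Tendsto ε atTop (𝓝 0) := by
      have h1' : Tendsto (fun n => zs (n + N)) atTop (𝓝 x) :=
        (hzs_tendsto.mono_right nhdsWithin_le_nhds).comp (tendsto_add_atTop_nat N)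
      have := h1'.sub_const x
      simpa [hε] using this
    have hMε : ∀ n, M (x + ε n) ≤ m + θ * ε n := by
      intro n
      have h := hzs (n + N)
      push_neg at h
      have hzz : zs (n + N) = x + ε n := by simp [hε]
      rw [hzz] at h
      linarith
    have hwec : ∀ n, dist (w + ε n • u') c ≤ x + ε n := by
      intro n
      calc dist (w + ε n • u') c ≤ dist (w + ε n • u') w + dist w c := dist_triangle _ _ _
        _ ≤ ε n + x := by
            rw [dist_eq_norm]
            simp only [add_sub_cancel_left, norm_smul, Real.norm_eq_abs,
              abs_of_pos (hε_pos n), hu'norm, mul_one]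
            linarith
        _ = x + ε n := by ring
    have hgwe : ∀ n, g (w + ε n • u') ≤ m + θ * ε n := by
      intro n
      obtain ⟨w2, _, _, hmax⟩ := attain (x + ε n) (by linarith [hε_pos n])
      exact (hmax _ (hwec n)).trans (hMε n)
    choose y hyX hyd using fun n => hXcl.exists_infDist_eq_dist hXne (w + ε n • u')
    have hydist : ∀ n, dist (w + ε n • u') (y n) ≤ m + θ * ε n := fun n => by
      rw [← hyd n]; exact hgwe n
    have hykey : ∀ n, 2 * m ^ 2 * (1 - θ) ≤ ‖p' - y n‖ ^ 2 := by
      intro n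
      have h1e := expand_sq p' (y n) u' hu'norm m
      rw [← hw_eq] at h1e
      have h2e := expand_sq p' (y n) u' hu'norm (m + ε n)
      have hwe : p' + (m + ε n) • u' = w + ε n • u' := by
        rw [hw_eq, add_smul]; abel
      rw [hwe] at h2e
      have hle : m ≤ ‖w - y n‖ := by
        rw [← dist_eq_norm]
        calc m = Metric.infDist w X := hmeq.symm
          _ ≤ dist w (y n) := infDist_le_dist_of_mem (hyX n)
      have e1 : m ^ 2 ≤ ‖p' - y n‖ ^ 2 + 2 * m * ⟪u', p' - y n⟫ + m ^ 2 := by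
        rw [← h1e]; exact pow_le_pow_left₀ hm0.le hle 2
      have hdsq : ‖w + ε n • u' - y n‖ ^ 2 ≤ (m + θ * ε n) ^ 2 := by
        rw [← dist_eq_norm]
        exact pow_le_pow_left₀ dist_nonneg (hydist n) 2
      have e2 : ‖p' - y n‖ ^ 2 + 2 * (m + ε n) * ⟪u', p' - y n⟫ + (m + ε n) ^ 2
          ≤ (m + θ * ε n) ^ 2 := by
        rw [← h2e]; exact hdsq
      have hεn := hε_pos n
      nlinarith [e1, e2, mul_pos hm0 hεn, mul_nonneg hθ0 hεn.le,
        mul_nonneg (mul_nonneg hθ0 hεn.le) hεn.le, sq_nonneg (ε n)]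
    have hbnd : ∀ n, y n ∈ closedBall w (m + 2) := by
      intro n
      rw [mem_closedBall, dist_comm]
      calc dist w (y n) ≤ dist w (w + ε n • u') + dist (w + ε n • u') (y n) := dist_triangle _ _ _
        _ ≤ ε n + (m + θ * ε n) := by
            refine add_le_add ?_ (hydist n)
            rw [dist_self_add_right, norm_smul, Real.norm_eq_abs,
              abs_of_pos (hε_pos n), hu'norm, mul_one]
        _ ≤ m + 2 := by nlinarith [hθ1, hε_le1 n, hε_pos n, hθ0]
    obtain ⟨a, _, φ, hφ, hay⟩ := tendsto_subseq_of_bounded isBounded_closedBall hbnd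
    have haX : a ∈ X := hXcl.mem_of_tendsto hay (Eventually.of_forall fun k => hyX (φ k))
    have hwyn : Tendsto (fun k => dist w (y (φ k))) atTop (𝓝 (dist w a)) :=
      (Tendsto.dist tendsto_const_nhds hay)
    have hεφ : Tendsto (fun k => ε (φ k)) atTop (𝓝 0) :=
      hε_tendsto.comp hφ.tendsto_atTop
    have hwa : dist w a = m := by
      have hub : ∀ k, dist w (y (φ k)) ≤ m + (1 + θ) * ε (φ k) := by
        intro k
        calc dist w (y (φ k)) ≤ dist w (w + ε (φ k) • u') + dist (w + ε (φ k) • u') (y (φ k)) :=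
              dist_triangle _ _ _
          _ ≤ ε (φ k) + (m + θ * ε (φ k)) := by
              refine add_le_add ?_ (hydist (φ k))
              rw [dist_self_add_right, norm_smul, Real.norm_eq_abs,
                abs_of_pos (hε_pos (φ k)), hu'norm, mul_one]
          _ = m + (1 + θ) * ε (φ k) := by ring
      have hlb : ∀ k, m ≤ dist w (y (φ k)) := by
        intro k
        calc m = Metric.infDist w X := hmeq.symm
          _ ≤ dist w (y (φ k)) := infDist_le_dist_of_mem (hyX (φ k))
      have hub_t : Tendsto (fun k => m + (1 + θ) * ε (φ k)) atTop (𝓝 m) := by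
        have := hεφ.const_mul (1 + θ)
        have := (tendsto_const_nhds (x := m)).add this
        simpa using this
      have hsq : Tendsto (fun k => dist w (y (φ k))) atTop (𝓝 m) :=
        tendsto_of_tendsto_of_tendsto_of_le_of_le (f := fun k => dist w (y (φ k)))
          (g := fun _ => m) (h := fun k => m + (1 + θ) * ε (φ k))
          tendsto_const_nhds hub_t (fun k => hlb k) (fun k => hub k)
      exact tendsto_nhds_unique hwyn hsq
    have huniq := hreach w (by rw [hmeq]; exact hmτ)
    have ha_eq : a = p' :=
      huniq.unique ⟨haX, by rw [hmeq]; exact hwa⟩ ⟨hp'X, by rw [hmeq]; exact hwp'⟩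
    have h2m : 0 < 2 * m ^ 2 * (1 - θ) :=
      mul_pos (by positivity) (by linarith : (0:ℝ) < 1 - θ)
    have hyp' : Tendsto (fun k => y (φ k)) atTop (𝓝 p') := ha_eq ▸ hay
    have htend0 : Tendsto (fun k => ‖p' - y (φ k)‖ ^ 2) atTop (𝓝 0) := by
      have h1' : Tendsto (fun k => p' - y (φ k)) atTop (𝓝 (p' - p')) :=
        tendsto_const_nhds.sub hyp'
      have h2' : Tendsto (fun k => ‖p' - y (φ k)‖) atTop (𝓝 0) := by
        simpa using h1'.norm
      have := h2'.pow 2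
      simpa using this
    have hlt := htend0.eventually (eventually_lt_nhds h2m)
    obtain ⟨k, hk⟩ := hlt.exists
    exact absurd (hykey (φ k)) (not_le.mpr hk)
  -- continuity of M on [0, L]
  set L := t' - δ with hLdef
  have hL0 : 0 < L := sub_pos.mpr h1
  have hMcont : ContinuousOn (fun t => -M t) (Icc 0 L) := by
    have : LipschitzOnWith 1 M (Icc 0 L) := by
      rw [lipschitzOnWith_iff_dist_le_mul]
      intro a ha b hb
      rcases le_total a b with hab | hab
      · have l1 := Mlip a b ha.1 hab
        have l2 := Mmono a b ha.1 hab
        rw [Real.dist_eq, Real.dist_eq, abs_of_nonpos (by linarith), abs_of_nonpos (by linarith)]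
        push_cast
        linarith
      · have l1 := Mlip b a hb.1 hab
        have l2 := Mmono b a hb.1 hab
        rw [Real.dist_eq, Real.dist_eq, abs_of_nonneg (by linarith), abs_of_nonneg (by linarith)]
        push_cast
        linarith
    exact (this.continuousOn).neg
  have key : ∀ θ : ℝ, 0 ≤ θ → θ < 1 → δ + θ * L ≤ M L := by
    intro θ hθ0 hθ1
    have hbd : ∀ z ∈ Icc (0:ℝ) L, -M z ≤ -δ - θ * z := by
      apply image_le_of_liminf_slope_right_lt_deriv_boundary (f := fun t => -M t)
        (f' := fun _ => (-1 : ℝ)) (B := fun t => -δ - θ * t) (B' := fun _ => -θ)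
      · exact hMcont
      · intro z hz rr hrr
        have hrr' : (-1 : ℝ) < rr := hrr
        have hz2 : z + δ < t' := by
          have := hz.2
          simp only [hLdef] at this
          linarith
        have hEV := EV z (max (-rr) 0) hz.1 hz2 (le_max_right _ _)
          (by rw [max_lt_iff]; constructor <;> linarith [hrr'])
        have hself : ∀ᶠ v in 𝓝[>] z, z < v := self_mem_nhdsWithin
        refine ((hEV.and hself).mono ?_).frequently
        rintro v ⟨hv1, hv2⟩
        have hvz : 0 < v - z := sub_pos.mpr hv2
        rw [slope_def_field, div_lt_iff₀ hvz]
        have h3 : -rr * (v - z) ≤ max (-rr) 0 * (v - z) :=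
          mul_le_mul_of_nonneg_right (le_max_left _ _) hvz.le
        linarith
      · simp [M0]
      · intro z
        simpa using ((hasDerivAt_id z).const_mul θ).const_sub (-δ)
      · intro z _ _
        linarith
    have := hbd L (right_mem_Icc.mpr hL0.le)
    linarith
  have hML : M L = t' := by
    have hle := Mle L hL0.le
    have hge : δ + L ≤ M L := by
      by_contra hcon
      push_neg at hcon
      have hMδ : δ ≤ M L := by
        have := Mmono 0 L le_rfl hL0.le
        rw [M0] at this; linarith
      set θ := ((M L - δ) / L + 1) / 2 with hθdef
      have hr1 : (M L - δ) / L < 1 := (div_lt_one hL0).mpr (by linarith)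
      have hr0 : 0 ≤ (M L - δ) / L := div_nonneg (by linarith) hL0.le
      have h := key θ (by rw [hθdef]; linarith) (by rw [hθdef]; linarith)
      have hθL : θ * L = (M L - δ + L) / 2 := by
        rw [hθdef]; field_simp
      rw [hθL] at h
      linarith
    linarith
  obtain ⟨w, hwc, hwM, _⟩ := attain L hL0.le
  have hgw : g w = t' := by rw [hwM, hML]
  have hdcp : dist c p = δ := hdist
  have h4 : t' ≤ dist w p := by
    rw [← hgw]; exact infDist_le_dist_of_mem hp
  have h3 : dist w p ≤ dist w c + dist c p := dist_triangle _ _ _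
  have h5 : dist w c = L := le_antisymm hwc (by rw [hdcp] at h3; linarith)
  have hwp : dist w p = t' := le_antisymm (by rw [h5, hdcp] at h3; linarith) h4
  have h6 : dist w c + dist c p = dist w p := by rw [h5, hdcp, hwp]; simp [hLdef]
  have hwbtw : Wbtw ℝ w c p := dist_add_dist_eq_iff.mp h6
  obtain ⟨ratio, hIcc, heq⟩ := hwbtw
  have hcp : c - p = (1 - ratio) • (w - p) := by
    rw [← heq, AffineMap.lineMap_apply_module]
    module
  have hnorm : δ = (1 - ratio) * t' := by
    have hn := congrArg norm hcp
    rw [norm_smul, Real.norm_eq_abs, abs_of_nonneg (by linarith [hIcc.2])] at hn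
    rw [← dist_eq_norm] at hn
    rw [show ‖w - p‖ = dist w p from (dist_eq_norm _ _).symm, hwp] at hn
    rw [hdcp] at hn
    exact hn
  have ht'0 : t' ≠ 0 := ne_of_gt (lt_trans hδ h1)
  have hδ0 : δ ≠ 0 := ne_of_gt hδ
  have hfin : (t' / δ) • (c - p) = w - p := by
    rw [hcp, smul_smul]
    have : t' / δ * (1 - ratio) = 1 := by
      field_simp
      rw [hnorm]; ring
    rw [this, one_smul]
  have : p + (t' / Metric.infDist c X) • (c - p) = w := by
    have hδX : Metric.infDist c X = δ := rfl
    rw [hδX, hfin]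
    abel
  rw [this]
  exact hgw

end Helpers

section Jung

lemma cont_sup' {ι : Type*} {E : Type*} [TopologicalSpace E] (t : Finset ι) (ht : t.Nonempty)
    (f : ι → E → ℝ) (hf : ∀ i, Continuous (f i)) :
    Continuous fun c => t.sup' ht fun i => f i c := by
  induction ht using Finset.Nonempty.cons_induction with
  | singleton i => simpa using hf i
  | cons i s his hs ih =>
      have heq : (fun c => (Finset.cons i s his).sup' (Finset.cons_nonempty his) fun j => f j c)
          = fun c => max (f i c) (s.sup' hs fun j => f j c) := by
        funext c
        exact Finset.sup'_cons hs _
      rw [heq]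
      exact (hf i).max ih

lemma jung {d k : ℕ} (hd : 1 ≤ d) (x : Fin (k + 1) → EuclideanSpace ℝ (Fin d))
    (ρ : Fin (k + 1) → ℝ) (hρ : ∀ i, 0 ≤ ρ i)
    (hpair : ∀ i j, dist (x i) (x j) ≤ ρ i + ρ j) :
    ∃ c, ∀ i, dist (x i) c ^ 2 ≤ 2 * d / (d + 1) * ρ i ^ 2 := by
  classical
  set s2 : ℝ := 2 * d / (d + 1) with hs2def
  have hd1 : (1:ℝ) ≤ d := by exact_mod_cast hd
  have hdpos : (0:ℝ) < (d:ℝ) + 1 := by linarith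
  have hs2eq : s2 * ((d:ℝ) + 1) = 2 * d := by rw [hs2def]; field_simp
  have hs2pos : 0 < s2 := by rw [hs2def]; positivity
  set gg : Fin (k + 1) → EuclideanSpace ℝ (Fin d) → ℝ := fun i c => ‖c - x i‖ ^ 2 - s2 * ρ i ^ 2 with hgg
  set F : EuclideanSpace ℝ (Fin d) → ℝ := fun c => Finset.univ.sup' Finset.univ_nonempty (fun i => gg i c) with hF
  have hFcont : Continuous F := by
    apply cont_sup'
    intro i
    have h1 : Continuous fun c : EuclideanSpace ℝ (Fin d) => ‖c - x i‖ :=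
      (continuous_id.sub continuous_const).norm
    have h2 : Continuous fun c : EuclideanSpace ℝ (Fin d) => ‖c - x i‖ ^ 2 := h1.pow 2
    exact h2.sub continuous_const
  have hFge : ∀ (z : EuclideanSpace ℝ (Fin d)) i, gg i z ≤ F z := by
    intro z i
    simp only [hF]
    exact Finset.le_sup' (fun j => gg j z) (Finset.mem_univ i)
  set V := F (x 0) with hV
  have hV0 : 0 ≤ V + s2 * ρ 0 ^ 2 := by
    have := hFge (x 0) 0
    simp only [hgg] at this
    nlinarith [norm_nonneg ((x 0) - x 0)]
  set R := Real.sqrt (V + s2 * ρ 0 ^ 2) + 1 with hR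
  have hR1 : 1 ≤ R := by
    rw [hR]; nlinarith [Real.sqrt_nonneg (V + s2 * ρ 0 ^ 2)]
  obtain ⟨cm, hcmK, hcmmin⟩ := (isCompact_closedBall (x 0) R).exists_isMinOn
    ⟨x 0, mem_closedBall_self (by linarith)⟩ hFcont.continuousOn
  have hmin : ∀ z : EuclideanSpace ℝ (Fin d), F cm ≤ F z := by
    intro z
    by_cases hz : z ∈ closedBall (x 0) R
    · exact hcmmin hz
    · have hzx : R < dist z (x 0) := by simpa [Metric.mem_closedBall, not_le] using hz
      have h1 : F cm ≤ V := hcmmin (mem_closedBall_self (by linarith))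
      have h2 : gg 0 z ≤ F z := hFge z 0
      have h3 : V + s2 * ρ 0 ^ 2 < ‖z - x 0‖ ^ 2 := by
        have hd0 : dist z (x 0) = ‖z - x 0‖ := dist_eq_norm _ _
        have hsq : Real.sqrt (V + s2 * ρ 0 ^ 2) ^ 2 = V + s2 * ρ 0 ^ 2 := Real.sq_sqrt hV0
        nlinarith [Real.sqrt_nonneg (V + s2 * ρ 0 ^ 2), hzx, hd0]
      simp only [hgg] at h2
      linarith
  by_cases hM : F cm ≤ 0
  · refine ⟨cm, fun i => ?_⟩
    have := hFge cm i
    simp only [hgg] at this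
    have hd2 : dist (x i) cm = ‖cm - x i‖ := by rw [dist_comm, dist_eq_norm]
    rw [hd2]
    linarith [this, hM]
  push_neg at hM
  exfalso
  set Mv := F cm with hMv
  set I : Finset (Fin (k + 1)) := Finset.univ.filter (fun i => gg i cm = Mv) with hI
  have hIval : ∀ i ∈ I, ‖cm - x i‖ ^ 2 = Mv + s2 * ρ i ^ 2 := by
    intro i hiI
    have : gg i cm = Mv := by
      simp only [hI, Finset.mem_filter] at hiI
      exact hiI.2
    simp only [hgg] at this
    linarith
  -- expansion of gg along a perturbation
  have hexp : ∀ (i : Fin (k + 1)) (t : ℝ) (v : EuclideanSpace ℝ (Fin d)),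
      gg i (cm + t • v) = gg i cm + 2 * t * ⟪cm - x i, v⟫ + t ^ 2 * ‖v‖ ^ 2 := by
    intro i t v
    simp only [hgg]
    have h1 : cm + t • v - x i = (cm - x i) + t • v := by abel
    rw [h1, norm_add_sq_real, real_inner_smul_right, norm_smul, Real.norm_eq_abs,
      mul_pow, sq_abs]
    ring
  -- cm is in the convex hull of argmax points
  have hhull : cm ∈ convexHull ℝ (x '' (I : Set (Fin (k + 1)))) := by
    by_contra hcK
    have hKconv : Convex ℝ (convexHull ℝ (x '' (I : Set (Fin (k + 1))))) := convex_convexHull _ _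
    have hKcl : IsClosed (convexHull ℝ (x '' (I : Set (Fin (k + 1))))) :=
      Set.Finite.isClosed_convexHull ℝ ((I : Set (Fin (k+1))).toFinite.image x)
    obtain ⟨f, u, hfc, hfgt⟩ := geometric_hahn_banach_point_closed hKconv hKcl hcK
    set v := (InnerProductSpace.toDual ℝ (EuclideanSpace ℝ (Fin d))).symm f with hv
    have hvf : ∀ z : EuclideanSpace ℝ (Fin d), ⟪v, z⟫ = f z := fun z => InnerProductSpace.toDual_symm_apply
    set γ := u - f cm with hγ
    have hγ0 : 0 < γ := by rw [hγ]; linarith [hfc]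
    have hIgt : ∀ i ∈ I, γ ≤ ⟪v, x i - cm⟫ := by
      intro i hiI
      have hxi : x i ∈ convexHull ℝ (x '' (I : Set (Fin (k + 1)))) :=
        subset_convexHull _ _ ⟨i, Finset.mem_coe.mpr hiI, rfl⟩
      have := hfgt _ hxi
      rw [inner_sub_right, hvf, hvf, hγ]
      linarith
    have hlt : ∀ i, i ∉ I → gg i cm < Mv := by
      intro i hiI
      rcases lt_or_eq_of_le (hFge cm i) with h | h
      · exact h
      · exact absurd (Finset.mem_filter.mpr ⟨Finset.mem_univ i, h.symm ▸ rfl⟩) hiI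
    -- eventual smallness
    have hev : ∀ᶠ t in 𝓝[>] (0:ℝ),
        (∀ i, i ∉ I → gg i cm + 2 * t * ⟪cm - x i, v⟫ + t ^ 2 * ‖v‖ ^ 2 < Mv)
        ∧ 0 < t ∧ t * ‖v‖ ^ 2 < γ := by
      have hall : ∀ᶠ t in 𝓝[>] (0:ℝ),
          ∀ i ∈ Finset.univ.filter (fun i => i ∉ I),
            gg i cm + 2 * t * ⟪cm - x i, v⟫ + t ^ 2 * ‖v‖ ^ 2 < Mv := by
        rw [Finset.eventually_all]
        intro i hi
        have hiI : i ∉ I := (Finset.mem_filter.mp hi).2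
        have hcont : Tendsto (fun t : ℝ => gg i cm + 2 * t * ⟪cm - x i, v⟫ + t ^ 2 * ‖v‖ ^ 2)
            (𝓝[>] 0) (𝓝 (gg i cm)) := by
          have : Continuous (fun t : ℝ => gg i cm + 2 * t * ⟪cm - x i, v⟫ + t ^ 2 * ‖v‖ ^ 2) := by
            fun_prop
          have h0 := (this.tendsto 0).mono_left (nhdsWithin_le_nhds (s := Set.Ioi (0:ℝ)))
          simpa using h0
        exact hcont.eventually (eventually_lt_nhds (hlt i hiI))
      have hsm : ∀ᶠ t in 𝓝[>] (0:ℝ), t * ‖v‖ ^ 2 < γ := by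
        have : Continuous (fun t : ℝ => t * ‖v‖ ^ 2) := by fun_prop
        have h0 := (this.tendsto 0).mono_left (nhdsWithin_le_nhds (s := Set.Ioi (0:ℝ)))
        simp only [zero_mul] at h0
        exact h0.eventually (eventually_lt_nhds hγ0)
      filter_upwards [hall, hsm, self_mem_nhdsWithin] with t h1 h2 h3
      exact ⟨fun i hi => h1 i (Finset.mem_filter.mpr ⟨Finset.mem_univ i, hi⟩), h3, h2⟩
    obtain ⟨t, h1, h2, h3⟩ := hev.exists
    have hFlt : F (cm + t • v) < Mv := by
      refine (Finset.sup'_lt_iff Finset.univ_nonempty).mpr ?_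
      intro i _
      show gg i (cm + t • v) < Mv
      rw [hexp i t v]
      by_cases hiI : i ∈ I
      · have hgi : gg i cm = Mv := by
          simp only [hI, Finset.mem_filter] at hiI
          exact hiI.2
        have hig := hIgt i hiI
        have hinner : ⟪cm - x i, v⟫ = -⟪v, x i - cm⟫ := by
          rw [real_inner_comm]
          rw [show cm - x i = -(x i - cm) by abel, inner_neg_right]
        rw [hgi, hinner]
        nlinarith [h2, h3, hig, hγ0]
      · have := h1 i hiI
        linarith
    exact absurd (hmin (cm + t • v)) (not_le.mpr hFlt)
  -- Caratheodory
  obtain ⟨ι', hfin, z, wt, hzrange, hAI, hwtpos, hwtsum, hwtc⟩ :=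
    eq_pos_convex_span_of_mem_convexHull hhull
  have hcard : (Fintype.card ι' : ℝ) ≤ (d:ℝ) + 1 := by
    have h1 := hAI.card_le_finrank_succ
    have h2 : Module.finrank ℝ (vectorSpan ℝ (Set.range z)) ≤ Module.finrank ℝ (EuclideanSpace ℝ (Fin d)) :=
      Submodule.finrank_le _
    have h3 : Module.finrank ℝ (EuclideanSpace ℝ (Fin d)) = d := finrank_euclideanSpace_fin
    have : Fintype.card ι' ≤ d + 1 := by omega
    exact_mod_cast this
  have hzI : ∀ j : ι', ∃ i, i ∈ I ∧ x i = z j := by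
    intro j
    have := hzrange (Set.mem_range_self j)
    simpa [Set.mem_image] using this
  choose idx hidxI hidxz using hzI
  set ρ' : ι' → ℝ := fun j => ρ (idx j) with hρ'
  have hρ'0 : ∀ j, 0 ≤ ρ' j := fun j => hρ _
  have hzdist : ∀ j l, dist (z j) (z l) ≤ ρ' j + ρ' l := by
    intro j l
    rw [← hidxz j, ← hidxz l]
    exact hpair _ _
  have hznorm : ∀ j, ‖cm - z j‖ ^ 2 = Mv + s2 * ρ' j ^ 2 := by
    intro j
    rw [← hidxz j]
    exact hIval _ (hidxI j)
  set P := ∑ j, wt j * ρ' j with hP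
  set Rv := ∑ j, wt j * ρ' j ^ 2 with hRv
  set Q := ∑ j, (wt j * ρ' j) ^ 2 with hQ
  have hRv0 : 0 ≤ Rv := Finset.sum_nonneg fun j _ =>
    mul_nonneg (hwtpos j).le (sq_nonneg _)
  have hQ0 : 0 ≤ Q := Finset.sum_nonneg fun j _ => sq_nonneg _
  -- zero-sum of weighted displacements
  have key0 : ∑ j, wt j • (z j - cm) = 0 := by
    have h1 : ∑ j, wt j • (z j - cm) = (∑ j, wt j • z j) - (∑ j, wt j) • cm := by
      rw [Finset.sum_smul]
      rw [← Finset.sum_sub_distrib]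
      apply Finset.sum_congr rfl
      intro j _
      rw [smul_sub]
    rw [h1, hwtsum, hwtc, one_smul, sub_self]
  have hinner0 : ∑ j, ∑ l, wt j * wt l * ⟪z j - cm, z l - cm⟫ = 0 := by
    have h1 : ⟪∑ j, wt j • (z j - cm), ∑ l, wt l • (z l - cm)⟫ = (0:ℝ) := by
      rw [key0, inner_zero_left]
    rw [← h1, sum_inner]
    apply Finset.sum_congr rfl
    intro j _
    rw [inner_sum]
    apply Finset.sum_congr rfl
    intro l _
    rw [real_inner_smul_left, real_inner_smul_right]
    ring
  -- single-sum reduction helper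
  have hsingle : ∀ c : ι' → ℝ, ∑ j, ∑ l, wt j * wt l * c j = ∑ j, wt j * c j := by
    intro c
    apply Finset.sum_congr rfl
    intro j _
    have : ∑ l, wt j * wt l * c j = (wt j * c j) * ∑ l, wt l := by
      rw [Finset.mul_sum]
      apply Finset.sum_congr rfl
      intro l _
      ring
    rw [this, hwtsum, mul_one]
  have hsingle' : ∀ c : ι' → ℝ, ∑ j, ∑ l, wt j * wt l * c l = ∑ j, wt j * c j := by
    intro c
    rw [Finset.sum_comm]
    apply Finset.sum_congr rfl
    intro l _
    have h2 : ∑ j, wt j * wt l * c l = (wt l * c l) * ∑ j, wt j := by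
      rw [Finset.mul_sum]
      apply Finset.sum_congr rfl
      intro j _
      ring
    rw [h2, hwtsum, mul_one]
  have sumsplit : ∀ f g h : ι' → ι' → ℝ,
      ∑ j, ∑ l, (f j l + g j l - 2 * h j l)
        = (∑ j, ∑ l, f j l) + (∑ j, ∑ l, g j l) - 2 * ∑ j, ∑ l, h j l := by
    intro f g h
    simp only [Finset.sum_add_distrib, Finset.sum_sub_distrib, Finset.mul_sum]
  have sumsplit2 : ∀ f g h : ι' → ι' → ℝ,
      ∑ j, ∑ l, (f j l + g j l + 2 * h j l)
        = (∑ j, ∑ l, f j l) + (∑ j, ∑ l, g j l) + 2 * ∑ j, ∑ l, h j l := by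
    intro f g h
    simp only [Finset.sum_add_distrib, Finset.mul_sum]
  have sumsplit3 : ∀ f g : ι' → ι' → ℝ,
      ∑ j, ∑ l, (f j l - g j l) = (∑ j, ∑ l, f j l) - (∑ j, ∑ l, g j l) := by
    intro f g
    simp only [Finset.sum_sub_distrib]
  have hwtnorm : ∑ j, wt j * ‖z j - cm‖ ^ 2 = Mv + s2 * Rv := by
    have h1 : ∀ j : ι', wt j * ‖z j - cm‖ ^ 2 = wt j * Mv + s2 * (wt j * ρ' j ^ 2) := by
      intro j
      rw [show ‖z j - cm‖ = ‖cm - z j‖ by rw [norm_sub_rev], hznorm j]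
      ring
    rw [Finset.sum_congr rfl (fun j _ => h1 j), Finset.sum_add_distrib, ← Finset.sum_mul,
      hwtsum, ← Finset.mul_sum, ← hRv]
    ring
  -- the central identity
  have hident : ∑ j, ∑ l, wt j * wt l * ‖z j - z l‖ ^ 2 = 2 * Mv + 2 * s2 * Rv := by
    have hpt : ∀ j l : ι', wt j * wt l * ‖z j - z l‖ ^ 2
        = wt j * wt l * ‖z j - cm‖ ^ 2 + wt j * wt l * ‖z l - cm‖ ^ 2
          - 2 * (wt j * wt l * ⟪z j - cm, z l - cm⟫) := by
      intro j l
      have h1 := norm_sub_sq_real (z j - cm) (z l - cm)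
      rw [show (z j - cm) - (z l - cm) = z j - z l by abel] at h1
      rw [h1]
      ring
    calc ∑ j, ∑ l, wt j * wt l * ‖z j - z l‖ ^ 2
        = ∑ j, ∑ l, (wt j * wt l * ‖z j - cm‖ ^ 2 + wt j * wt l * ‖z l - cm‖ ^ 2
          - 2 * (wt j * wt l * ⟪z j - cm, z l - cm⟫)) := by
          apply Finset.sum_congr rfl; intro j _
          apply Finset.sum_congr rfl; intro l _
          exact hpt j l
      _ = (∑ j, ∑ l, wt j * wt l * ‖z j - cm‖ ^ 2)
          + (∑ j, ∑ l, wt j * wt l * ‖z l - cm‖ ^ 2)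
          - 2 * ∑ j, ∑ l, wt j * wt l * ⟪z j - cm, z l - cm⟫ := by
          exact sumsplit (fun j l => wt j * wt l * ‖z j - cm‖ ^ 2)
            (fun j l => wt j * wt l * ‖z l - cm‖ ^ 2)
            (fun j l => wt j * wt l * ⟪z j - cm, z l - cm⟫)
      _ = (Mv + s2 * Rv) + (Mv + s2 * Rv) - 2 * 0 := by
          rw [hsingle (fun j => ‖z j - cm‖ ^ 2), hsingle' (fun l => ‖z l - cm‖ ^ 2),
            hwtnorm, hinner0]
      _ = 2 * Mv + 2 * s2 * Rv := by ring
  -- upper bound on the double sum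
  have hup : ∑ j, ∑ l, wt j * wt l * ‖z j - z l‖ ^ 2 ≤ 2 * Rv + 2 * P ^ 2 - 4 * Q := by
    have hpt : ∀ j l : ι', wt j * wt l * ‖z j - z l‖ ^ 2
        ≤ wt j * wt l * (ρ' j + ρ' l) ^ 2 - (if j = l then 4 * (wt j * ρ' j) ^ 2 else 0) := by
      intro j l
      by_cases hjl : j = l
      · subst hjl
        simp only [if_true]
        have : z j - z j = 0 := sub_self _
        rw [this, norm_zero]
        nlinarith [sq_nonneg (wt j * ρ' j)]
      · simp only [hjl, if_false, sub_zero]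
        have hzn : ‖z j - z l‖ = dist (z j) (z l) := (dist_eq_norm _ _).symm
        have h1 : dist (z j) (z l) ^ 2 ≤ (ρ' j + ρ' l) ^ 2 :=
          pow_le_pow_left₀ dist_nonneg (hzdist j l) 2
        have h2 : 0 ≤ wt j * wt l := mul_nonneg (hwtpos j).le (hwtpos l).le
        rw [hzn]
        nlinarith
    have hS1 : ∑ j, ∑ l, wt j * wt l * (ρ' j + ρ' l) ^ 2 = 2 * Rv + 2 * P ^ 2 := by
      have hpt2 : ∀ j l : ι', wt j * wt l * (ρ' j + ρ' l) ^ 2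
          = wt j * wt l * ρ' j ^ 2 + wt j * wt l * ρ' l ^ 2
            + 2 * ((wt j * ρ' j) * (wt l * ρ' l)) := by
        intro j l; ring
      calc ∑ j, ∑ l, wt j * wt l * (ρ' j + ρ' l) ^ 2
          = ∑ j, ∑ l, (wt j * wt l * ρ' j ^ 2 + wt j * wt l * ρ' l ^ 2
            + 2 * ((wt j * ρ' j) * (wt l * ρ' l))) := by
            apply Finset.sum_congr rfl; intro j _
            apply Finset.sum_congr rfl; intro l _
            exact hpt2 j l
        _ = (∑ j, ∑ l, wt j * wt l * ρ' j ^ 2) + (∑ j, ∑ l, wt j * wt l * ρ' l ^ 2)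
            + 2 * ∑ j, ∑ l, (wt j * ρ' j) * (wt l * ρ' l) := by
            exact sumsplit2 (fun j l => wt j * wt l * ρ' j ^ 2)
              (fun j l => wt j * wt l * ρ' l ^ 2)
              (fun j l => (wt j * ρ' j) * (wt l * ρ' l))
        _ = Rv + Rv + 2 * P ^ 2 := by
            rw [hsingle (fun j => ρ' j ^ 2), hsingle' (fun l => ρ' l ^ 2)]
            have hPP : ∑ j, ∑ l, (wt j * ρ' j) * (wt l * ρ' l) = P ^ 2 := by
              rw [hP, sq, Finset.sum_mul_sum]
            rw [hPP]
        _ = 2 * Rv + 2 * P ^ 2 := by ring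
    have hS2 : ∑ j, (∑ l, (if j = l then 4 * (wt j * ρ' j) ^ 2 else 0)) = 4 * Q := by
      have : ∀ j : ι', ∑ l, (if j = l then 4 * (wt j * ρ' j) ^ 2 else 0)
          = 4 * (wt j * ρ' j) ^ 2 := by
        intro j
        rw [Finset.sum_ite_eq]
        simp
      rw [Finset.sum_congr rfl (fun j _ => this j), hQ, Finset.mul_sum]
    calc ∑ j, ∑ l, wt j * wt l * ‖z j - z l‖ ^ 2
        ≤ ∑ j, ∑ l, (wt j * wt l * (ρ' j + ρ' l) ^ 2
            - (if j = l then 4 * (wt j * ρ' j) ^ 2 else 0)) := by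
          apply Finset.sum_le_sum; intro j _
          apply Finset.sum_le_sum; intro l _
          exact hpt j l
      _ = (∑ j, ∑ l, wt j * wt l * (ρ' j + ρ' l) ^ 2)
          - ∑ j, ∑ l, (if j = l then 4 * (wt j * ρ' j) ^ 2 else 0) := by
          exact sumsplit3 (fun j l => wt j * wt l * (ρ' j + ρ' l) ^ 2)
            (fun j l => if j = l then 4 * (wt j * ρ' j) ^ 2 else 0)
      _ = 2 * Rv + 2 * P ^ 2 - 4 * Q := by rw [hS1, hS2]
  -- Cauchy-Schwarz inequalities
  have hCS1 : P ^ 2 ≤ Rv := by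
    have h := Finset.sum_mul_sq_le_sq_mul_sq Finset.univ
      (fun j => Real.sqrt (wt j)) (fun j => Real.sqrt (wt j) * ρ' j)
    have h1 : ∀ j : ι', Real.sqrt (wt j) * (Real.sqrt (wt j) * ρ' j) = wt j * ρ' j := by
      intro j
      rw [← mul_assoc, Real.mul_self_sqrt (hwtpos j).le]
    have h2 : ∀ j : ι', Real.sqrt (wt j) ^ 2 = wt j := fun j => Real.sq_sqrt (hwtpos j).le
    have h3 : ∀ j : ι', (Real.sqrt (wt j) * ρ' j) ^ 2 = wt j * ρ' j ^ 2 := by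
      intro j
      rw [mul_pow, h2 j]
    rw [Finset.sum_congr rfl (fun j _ => h1 j), Finset.sum_congr rfl (fun j _ => h2 j),
      Finset.sum_congr rfl (fun j _ => h3 j), hwtsum, one_mul] at h
    rw [hP, hRv]
    exact h
  have hCS2 : P ^ 2 ≤ ((d:ℝ) + 1) * Q := by
    have h := sq_sum_le_card_mul_sum_sq (s := (Finset.univ : Finset ι'))
      (f := fun j : ι' => wt j * ρ' j)
    calc P ^ 2 ≤ (((Finset.univ : Finset ι').card : ℝ)) * ∑ j, (wt j * ρ' j) ^ 2 := by
          rw [hP]; exact_mod_cast h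
      _ = (Fintype.card ι' : ℝ) * Q := by rw [Finset.card_univ, hQ]
      _ ≤ ((d:ℝ) + 1) * Q := mul_le_mul_of_nonneg_right hcard hQ0
  -- final contradiction
  have hmain : 2 * Mv + 2 * s2 * Rv ≤ 2 * Rv + 2 * P ^ 2 - 4 * Q := by
    rw [← hident]; exact hup
  rcases le_total (((d:ℝ) + 1) * Q) Rv with hcase | hcase
  · nlinarith [mul_le_mul_of_nonneg_left hcase (show (0:ℝ) ≤ 2 * d - 2 by linarith),
      hM, hCS2, hmain, hs2eq, hdpos, hQ0]
  · nlinarith [hM, hCS1, hmain, hs2eq, hdpos, hcase, hQ0, hRv0]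

end Jung

/-- Rips to restricted Čech interleaving on a positive reach set:
if `√(2d/(d+1)) r_i ≤ τ − d_X(x_i)` and pairwise `‖x_i − x_j‖ < r_i + r_j`, then there
is a point `p ∈ X` with `‖x_i − p‖ < √((4d/(d+1)) r_i² + d_X(x_i)(2τ − d_X(x_i)))`. -/
theorem stmt6 (d k : ℕ) (hd : 1 ≤ d) (X : Set (EuclideanSpace ℝ (Fin d))) (hXne : X.Nonempty)
    (hXcl : IsClosed X) (τ : ℝ) (hτ : 0 < τ)
    (hreach : ∀ z : EuclideanSpace ℝ (Fin d), Metric.infDist z X < τ →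
      ∃! p, p ∈ X ∧ dist z p = Metric.infDist z X)
    (x : Fin (k + 1) → EuclideanSpace ℝ (Fin d)) (r : Fin (k + 1) → ℝ)
    (hr : ∀ i, 0 < r i)
    (hrτ : ∀ i, Real.sqrt (2 * d / (d + 1)) * r i ≤ τ - Metric.infDist (x i) X)
    (hrips : ∀ i j, dist (x i) (x j) < r i + r j) :
    ∃ p ∈ X, ∀ i, dist (x i) p < Real.sqrt ((4 * d / (d + 1)) * r i ^ 2 +
      Metric.infDist (x i) X * (2 * τ - Metric.infDist (x i) X)) := by
  classical
  have hd1 : (1:ℝ) ≤ d := by exact_mod_cast hd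
  have hdpos : (0:ℝ) < (d:ℝ) + 1 := by linarith
  set s2 : ℝ := 2 * (d:ℝ) / ((d:ℝ) + 1) with hs2def
  have hs2pos : 0 < s2 := by rw [hs2def]; positivity
  set s : ℝ := Real.sqrt (2 * (d:ℝ) / ((d:ℝ) + 1)) with hsdef
  have hsq : s ^ 2 = s2 := by rw [hsdef, hs2def]; exact Real.sq_sqrt (by positivity)
  have hs_pos : 0 < s := by rw [hsdef]; exact Real.sqrt_pos.mpr (by positivity)
  have hdi_nonneg : ∀ i, 0 ≤ Metric.infDist (x i) X := fun i => Metric.infDist_nonneg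
  have hdi_lt : ∀ i, Metric.infDist (x i) X < τ := by
    intro i
    have h := hrτ i
    nlinarith [mul_pos hs_pos (hr i)]
  -- strict shrinking factor θ
  set pf : Fin (k+1) × Fin (k+1) → ℝ := fun q => dist (x q.1) (x q.2) / (r q.1 + r q.2) with hpf
  have hune : (Finset.univ : Finset (Fin (k+1) × Fin (k+1))).Nonempty := Finset.univ_nonempty
  set θ : ℝ := Finset.univ.sup' hune pf with hθdef
  have hθlt : θ < 1 := by
    rw [hθdef, Finset.sup'_lt_iff]
    intro q _
    have hpos : 0 < r q.1 + r q.2 := add_pos (hr q.1) (hr q.2)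
    exact (div_lt_one hpos).mpr (hrips q.1 q.2)
  have hθ0 : 0 ≤ θ := by
    have h := Finset.le_sup' pf (Finset.mem_univ ((0 : Fin (k+1)), (0 : Fin (k+1))))
    rw [← hθdef] at h
    have hval : pf ((0 : Fin (k+1)), (0 : Fin (k+1))) = 0 := by
      rw [hpf]; simp
    linarith [hval ▸ h]
  have hpairθ : ∀ i j, dist (x i) (x j) ≤ θ * r i + θ * r j := by
    intro i j
    have h := Finset.le_sup' pf (Finset.mem_univ (i, j))
    rw [← hθdef] at h
    have hrij : 0 < r i + r j := add_pos (hr i) (hr j)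
    have h2 : dist (x i) (x j) / (r i + r j) ≤ θ := h
    have h3 := (div_le_iff₀ hrij).mp h2
    nlinarith [h3]
  obtain ⟨c, hc⟩ := jung hd x (fun i => θ * r i) (fun i => mul_nonneg hθ0 (hr i).le) hpairθ
  have hEi : ∀ i, dist (x i) c ^ 2 < s2 * r i ^ 2 := by
    intro i
    have h := hc i
    have heq : 2 * (d:ℝ) / ((d:ℝ)+1) * (θ * r i)^2 = s2 * θ^2 * r i^2 := by rw [hs2def]; ring
    rw [heq] at h
    have hθ2 : θ^2 < 1 := by nlinarith
    nlinarith [mul_pos hs2pos (mul_pos (hr i) (hr i)), sq_nonneg (r i), hs2pos, hr i]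
  have hdistc : ∀ i, dist (x i) c < s * r i := by
    intro i
    have h := hEi i
    have hs2r : s2 * r i ^ 2 = (s * r i)^2 := by rw [mul_pow, hsq]
    rw [hs2r] at h
    exact lt_of_pow_lt_pow_left₀ 2 (mul_nonneg hs_pos.le (hr i).le) h
  have hB0 : ∀ i, 0 ≤ Metric.infDist (x i) X * (2*τ - Metric.infDist (x i) X) := by
    intro i
    have h1 := hdi_lt i
    have h2 := hdi_nonneg i
    nlinarith
  have htarg : ∀ i, 4 * (d:ℝ) / ((d:ℝ)+1) * r i ^2 = 2 * s2 * r i ^2 := by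
    intro i; rw [hs2def]; ring
  set δ : ℝ := Metric.infDist c X with hδdef
  have hδτ : δ < τ := by
    have h1 : Metric.infDist c X ≤ Metric.infDist (x 0) X + dist c (x 0) :=
      infDist_le_infDist_add_dist
    have h2 : dist c (x 0) < s * r 0 := by rw [dist_comm]; exact hdistc 0
    have h3 := hrτ 0
    linarith
  rcases eq_or_lt_of_le (Metric.infDist_nonneg : 0 ≤ Metric.infDist c X) with hδ0 | hδ0
  · -- c ∈ X directly
    have hcX : c ∈ X := (hXcl.mem_iff_infDist_zero hXne).mpr hδ0.symm
    refine ⟨c, hcX, fun i => ?_⟩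
    rw [Real.lt_sqrt dist_nonneg, htarg i]
    nlinarith [hEi i, hB0 i, mul_pos hs2pos (mul_pos (hr i) (hr i))]
  · -- main case: project c to X
    obtain ⟨p, hpX, hpd⟩ := hXcl.exists_infDist_eq_dist hXne c
    have hdistcp : dist c p = δ := hpd.symm
    refine ⟨p, hpX, fun i => ?_⟩
    set di : ℝ := Metric.infDist (x i) X with hdi
    set A : ℝ := dist (x i) p ^ 2 with hA
    set B : ℝ := di * (2 * τ - di) with hB
    set G : ℝ := ⟪x i - p, c - p⟫ with hG
    have hcpnorm : ‖c - p‖ = δ := by rw [← dist_eq_norm]; exact hdistcp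
    -- inner product bound via the rolling ball
    have hGbound : 2 * τ * G ≤ δ * (A + B) := by
      have hstep : ∀ t : ℝ, max δ di < t → t < τ →
          2 * t * G ≤ δ * (A + di * (2 * t - di)) := by
        intro t hmax ht
        have hδt : δ < t := lt_of_le_of_lt (le_max_left _ _) hmax
        have hdit : di < t := lt_of_le_of_lt (le_max_right _ _) hmax
        have hz := rolling hXne hXcl hreach c p hpX hpd.symm hδ0 hδt ht
        set z := p + (t / δ) • (c - p) with hzdef
        have h1 : t ≤ di + dist z (x i) := by
          have h2 : Metric.infDist z X ≤ Metric.infDist (x i) X + dist z (x i) :=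
            infDist_le_infDist_add_dist
          rw [hz] at h2
          exact h2
        have h2 : t - di ≤ dist (x i) z := by
          rw [dist_comm]; linarith
        have h2sq : (t - di) ^ 2 ≤ dist (x i) z ^ 2 :=
          pow_le_pow_left₀ (by linarith) h2 2
        have hexp : dist (x i) z ^ 2 = A - 2 * (t / δ) * G + t ^ 2 := by
          rw [dist_eq_norm, hzdef]
          have hrw : x i - (p + (t / δ) • (c - p)) = (x i - p) - (t / δ) • (c - p) := by
            abel
          rw [hrw, norm_sub_sq_real, real_inner_smul_right, norm_smul, Real.norm_eq_abs,
            mul_pow, sq_abs, hcpnorm]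
          have hδne : δ ≠ 0 := ne_of_gt hδ0
          rw [hA, dist_eq_norm, hG]
          field_simp
        rw [hexp] at h2sq
        have h3 : 2 * (t / δ) * G ≤ A + di * (2 * t - di) := by nlinarith [h2sq]
        have h4 := mul_le_mul_of_nonneg_left h3 hδ0.le
        have h5 : δ * (2 * (t / δ) * G) = 2 * t * G := by
          rw [show δ * (2 * (t / δ) * G) = 2 * t * G * (δ / δ) by ring, div_self (ne_of_gt hδ0), mul_one]
        rw [h5] at h4
        exact h4
      have hmaxτ : max δ di < τ := max_lt hδτ (hdi_lt i)
      have hev : ∀ᶠ t in 𝓝[<] τ, 2 * t * G ≤ δ * (A + di * (2 * t - di)) := by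
        filter_upwards [Ioo_mem_nhdsLT hmaxτ] with t ht
        exact hstep t ht.1 ht.2
      have hlhs : Tendsto (fun t : ℝ => 2 * t * G) (𝓝[<] τ) (𝓝 (2 * τ * G)) := by
        have hcont : Continuous fun t : ℝ => 2 * t * G := by fun_prop
        exact (hcont.tendsto τ).mono_left nhdsWithin_le_nhds
      have hrhs : Tendsto (fun t : ℝ => δ * (A + di * (2 * t - di))) (𝓝[<] τ)
          (𝓝 (δ * (A + di * (2 * τ - di)))) := by
        have hcont : Continuous fun t : ℝ => δ * (A + di * (2 * t - di)) := by fun_prop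
        exact (hcont.tendsto τ).mono_left nhdsWithin_le_nhds
      have := le_of_tendsto_of_tendsto hlhs hrhs hev
      rw [hB]
      exact this
    -- norm expansion at c
    have hEc : dist (x i) c ^ 2 = A - 2 * G + δ ^ 2 := by
      rw [dist_eq_norm]
      have hrw : x i - c = (x i - p) - (c - p) := by abel
      rw [hrw, norm_sub_sq_real, hcpnorm, hA, dist_eq_norm, hG]
    have hElt : A - 2 * G + δ ^ 2 < s2 * r i ^ 2 := by
      rw [← hEc]; exact hEi i
    -- algebra
    have hsr : s * r i ≤ τ - di := hrτ i
    have hsrsq : s2 * r i ^ 2 ≤ (τ - di) ^ 2 := by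
      have h0 : 0 ≤ s * r i := mul_nonneg hs_pos.le (hr i).le
      have := pow_le_pow_left₀ h0 hsr 2
      rw [mul_pow, hsq] at this
      exact this
    have hu : s2 * r i ^ 2 + B ≤ τ ^ 2 := by
      rw [hB]
      have h1 := hdi_nonneg i
      rw [← hdi] at h1
      nlinarith [hsrsq]
    have huB0 : 0 ≤ s2 * r i ^ 2 + B := by
      have := hB0 i
      rw [← hdi, ← hB] at this
      positivity
    have hAineq : A * (τ - δ) < τ * (s2 * r i ^ 2) - τ * δ ^ 2 + δ * B := by
      nlinarith [mul_lt_mul_of_pos_left hElt hτ, hGbound]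
    have hW : τ * (s2 * r i ^ 2) - τ * δ ^ 2 + δ * B ≤ (2 * s2 * r i ^ 2 + B) * (τ - δ) := by
      nlinarith [sq_nonneg (τ * δ - (s2 * r i ^ 2 + B)),
        mul_nonneg huB0 (by linarith [hu] : (0:ℝ) ≤ τ ^ 2 - (s2 * r i ^ 2 + B)), hτ]
    have hfinal : A < 2 * s2 * r i ^ 2 + B :=
      lt_of_mul_lt_mul_right (lt_of_lt_of_le hAineq hW) (by linarith : (0:ℝ) ≤ τ - δ)
    rw [Real.lt_sqrt dist_nonneg, htarg i]
    exact hfinal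
end

section
/- Let A ⊆ ℝ^d be a nonempty closed set with reach at least τ > 0 (every z with infDist(z, A) < τ has a unique nearest point in A). Let x_1, …, x_k ∈ ℝ^d with d_A(x_i) < τ for all i, let λ_1, …, λ_k ∈ [0,1] with Σ λ_i = 1, and set u := Σ_i λ_i x_i. If d_A(u) < τ, then the unique nearest point π_A(u) of u in A satisfies ‖u − π_A(u)‖ ≤ τ − √( max( 0, Σ_i λ_i (τ − d_A(x_i))² − Σ_{i<j} λ_i λ_j ‖x_i − x_j‖² ) ). -/
set_option maxHeartbeats 1000000

open Metric InnerProductSpace Filter Topology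

section Stmt8Aux

variable {F : Type*} [NormedAddCommGroup F] [InnerProductSpace ℝ F] [ProperSpace F]

omit [ProperSpace F] in
lemma stmt8_normal {A : Set F} {y p b : F}
    (hpd : dist y p = Metric.infDist y A) (hb : b ∈ A) :
    ⟪y - p, b - p⟫_ℝ ≤ ‖b - p‖ ^ 2 / 2 := by
  have h1 : dist y p ≤ dist y b := hpd ▸ Metric.infDist_le_dist_of_mem hb
  rw [dist_eq_norm, dist_eq_norm] at h1
  have h2 : ‖y - p‖ ^ 2 ≤ ‖y - b‖ ^ 2 := pow_le_pow_left₀ (norm_nonneg _) h1 2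
  have h3 : y - b = (y - p) - (b - p) := by abel
  rw [h3, norm_sub_sq_real (y - p) (b - p)] at h2
  linarith

lemma stmt8_cont {A : Set F} (hAcl : IsClosed A) {τ : ℝ}
    (hreach : ∀ z : F, Metric.infDist z A < τ →
      ∃! p, p ∈ A ∧ dist z p = Metric.infDist z A)
    {c q : F} (hdc : Metric.infDist c A < τ) (hqA : q ∈ A)
    (hqd : dist c q = Metric.infDist c A) {ρ : ℝ} (hρ : 0 < ρ) :
    ∃ ε₀ > 0, ∀ y a : F, dist y c ≤ ε₀ → a ∈ A → dist y a = Metric.infDist y A →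
      dist a q ≤ ρ := by
  by_contra hcon
  push_neg at hcon
  have hstep : ∀ n : ℕ, ∃ y a : F, dist y c ≤ 1 / (n + 1) ∧ a ∈ A ∧
      dist y a = Metric.infDist y A ∧ ρ < dist a q := by
    intro n
    obtain ⟨y, a, h1, h2, h3, h4⟩ := hcon (1 / (n + 1)) (by positivity)
    exact ⟨y, a, h1, h2, h3, h4⟩
  choose y a hy ha hmin hfar using hstep
  have hbound : ∀ n, a n ∈ A ∩ closedBall c (Metric.infDist c A + 2) := by
    intro n
    have h1 : (1 : ℝ) / (n + 1) ≤ 1 := by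
      rw [div_le_one (by positivity)]; linarith [Nat.cast_nonneg (α := ℝ) n]
    have h3 : Metric.infDist (y n) A ≤ Metric.infDist c A + dist (y n) c :=
      Metric.infDist_le_infDist_add_dist
    refine ⟨ha n, mem_closedBall.mpr ?_⟩
    calc dist (a n) c ≤ dist (a n) (y n) + dist (y n) c := dist_triangle _ _ _
      _ = Metric.infDist (y n) A + dist (y n) c := by rw [dist_comm, hmin n]
      _ ≤ Metric.infDist c A + dist (y n) c + dist (y n) c := by linarith
      _ ≤ Metric.infDist c A + 2 := by linarith [hy n]
  have hcomp : IsCompact (A ∩ closedBall c (Metric.infDist c A + 2)) :=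
    (isCompact_closedBall c _).of_isClosed_subset
      (hAcl.inter Metric.isClosed_closedBall) Set.inter_subset_right
  obtain ⟨b, hbmem, φ, hφ, hconv⟩ := hcomp.tendsto_subseq hbound
  have hyconv : Tendsto (fun k => y (φ k)) atTop (𝓝 c) := by
    rw [tendsto_iff_dist_tendsto_zero]
    refine squeeze_zero (fun k => dist_nonneg) (g := fun k : ℕ => 1 / (k + 1)) ?_
      tendsto_one_div_add_atTop_nhds_zero_nat
    intro k
    refine (hy (φ k)).trans ?_
    have h2 : (k : ℝ) + 1 ≤ (φ k : ℝ) + 1 := by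
      have := hφ.le_apply (x := k); push_cast; linarith [Nat.cast_le (α := ℝ).mpr this]
    exact one_div_le_one_div_of_le (by positivity) h2
  have hdab : Tendsto (fun k => dist (y (φ k)) (a (φ k))) atTop (𝓝 (dist c b)) :=
    hyconv.dist hconv
  have hdinf : Tendsto (fun k => Metric.infDist (y (φ k)) A) atTop
      (𝓝 (Metric.infDist c A)) :=
    ((Metric.continuous_infDist_pt A).continuousAt).tendsto.comp hyconv
  have hcb : dist c b = Metric.infDist c A := by
    refine tendsto_nhds_unique hdab ?_
    exact hdinf.congr (fun k => (hmin (φ k)).symm)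
  -- uniqueness forces b = q
  obtain ⟨p₀, hp₀, huni⟩ := hreach c hdc
  have hbq : b = q := by
    have h1 := huni b ⟨hbmem.1, hcb⟩
    have h2 := huni q ⟨hqA, hqd⟩
    rw [h1, h2]
  have hlim : Tendsto (fun k => dist (a (φ k)) q) atTop (𝓝 0) := by
    have := hconv.dist (tendsto_const_nhds (x := q))
    rwa [hbq, dist_self] at this
  have hρ0 : ρ ≤ 0 := ge_of_tendsto' hlim (fun k => (hfar (φ k)).le)
  linarith

lemma stmt8_far {A : Set F} (hAcl : IsClosed A) (hAne : A.Nonempty) {τ : ℝ}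
    (hreach : ∀ z : F, Metric.infDist z A < τ →
      ∃! p, p ∈ A ∧ dist z p = Metric.infDist z A)
    (u : F) (hr : 0 < Metric.infDist u A) {T δ : ℝ} (hT : 0 ≤ T)
    (hrT : Metric.infDist u A + T < τ) (hδ0 : 0 < δ) (hδ1 : δ < 1) :
    ∃ c : F, dist c u ≤ T ∧
      Metric.infDist u A + (1 - δ) * T ≤ Metric.infDist c A := by
  set r := Metric.infDist u A with hrdef
  set KK : Set (ℝ × F) := {z | 0 ≤ z.1 ∧ z.1 ≤ T ∧ dist z.2 u ≤ z.1 ∧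
    r + (1 - δ) * z.1 ≤ Metric.infDist z.2 A} with hKK
  have hKKclosed : IsClosed KK := by
    apply IsClosed.inter (isClosed_le continuous_const continuous_fst)
    apply IsClosed.inter (isClosed_le continuous_fst continuous_const)
    apply IsClosed.inter
    · exact isClosed_le (continuous_snd.dist continuous_const) continuous_fst
    · exact isClosed_le (continuous_const.add (continuous_const.mul continuous_fst))
        ((Metric.continuous_infDist_pt A).comp continuous_snd)
  have hKKsub : KK ⊆ (Set.Icc 0 T) ×ˢ (closedBall u T) := by
    rintro ⟨t, c⟩ ⟨h1, h2, h3, h4⟩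
    exact ⟨⟨h1, h2⟩, mem_closedBall.mpr (h3.trans h2)⟩
  have hKKcomp : IsCompact KK :=
    ((isCompact_Icc).prod (isCompact_closedBall u T)).of_isClosed_subset hKKclosed hKKsub
  have hScomp : IsCompact (Prod.fst '' KK) := hKKcomp.image continuous_fst
  have h0S : (0 : ℝ) ∈ Prod.fst '' KK := by
    refine ⟨(0, u), ⟨le_refl _, hT, by simp, by simp [hrdef]⟩, rfl⟩
  have hSne : (Prod.fst '' KK).Nonempty := ⟨0, h0S⟩
  have hs₀S : sSup (Prod.fst '' KK) ∈ Prod.fst '' KK := hScomp.sSup_mem hSne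
  obtain ⟨⟨t₀, c⟩, hmemKK, ht₀⟩ := hs₀S
  obtain ⟨ht0, htT, hcd, hcD⟩ := hmemKK
  simp only at ht₀ ht0 htT hcd hcD
  rcases eq_or_lt_of_le htT with heq | hlt
  · exact ⟨c, by rw [← heq]; exact hcd, by rw [← heq]; exact hcD⟩
  -- now derive a contradiction
  exfalso
  set m := Metric.infDist c A with hm
  have hrm : r ≤ m := le_trans (by nlinarith) hcD
  have hm0 : 0 < m := lt_of_lt_of_le hr hrm
  have hmub : m ≤ r + t₀ := by
    calc m ≤ r + dist c u := Metric.infDist_le_infDist_add_dist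
      _ ≤ r + t₀ := by linarith
  have hmτ : m < τ := by linarith
  obtain ⟨q, hqA, hqd⟩ := hAcl.exists_infDist_eq_dist hAne c
  set ρ := r * Real.sqrt δ with hρdef
  have hρ : 0 < ρ := mul_pos hr (Real.sqrt_pos.mpr hδ0)
  obtain ⟨ε₀, hε₀, hcont⟩ := stmt8_cont hAcl hreach hmτ hqA hqd.symm hρ
  set ε := min ε₀ (T - t₀) with hε
  have hε0 : 0 < ε := lt_min hε₀ (by linarith)
  have hεT : t₀ + ε ≤ T := by
    have h := min_le_right ε₀ (T - t₀); rw [← hε] at h; linarith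
  have hcq : dist c q = m := hqd.symm
  have hcqn : ‖c - q‖ = m := by rw [← dist_eq_norm]; exact hcq
  set v : F := (m⁻¹ : ℝ) • (c - q) with hv
  have hvn : ‖v‖ = 1 := by
    rw [hv, norm_smul, norm_inv, Real.norm_eq_abs, abs_of_pos hm0, hcqn]
    field_simp
  set c' := c + ε • v with hc'
  have hc'c : dist c' c = ε := by
    rw [hc', dist_eq_norm]
    simp only [add_sub_cancel_left]
    rw [norm_smul, Real.norm_eq_abs, abs_of_pos hε0, hvn, mul_one]
  obtain ⟨a, haA, had⟩ := hAcl.exists_infDist_eq_dist hAne c'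
  have hfar : dist a q ≤ ρ :=
    hcont c' a (by rw [hc'c]; exact min_le_left _ _) haA had.symm
  have hρ2 : ρ ^ 2 = r ^ 2 * δ := by
    rw [hρdef, mul_pow, Real.sq_sqrt hδ0.le]
  -- key computation
  have hca : m ≤ ‖c - a‖ := by
    rw [← dist_eq_norm]; exact hm ▸ Metric.infDist_le_dist_of_mem haA
  have hexp : ‖c' - a‖ ^ 2 = ‖c - a‖ ^ 2 + 2 * (ε * ⟪v, c - a⟫_ℝ) + ε ^ 2 := by
    have h1 : c' - a = (c - a) + ε • v := by rw [hc']; abel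
    rw [h1, norm_add_sq_real, real_inner_smul_right, norm_smul, Real.norm_eq_abs,
      abs_of_pos hε0, hvn, mul_one, real_inner_comm (c - a) v]
  have hinner : m - ρ ^ 2 / (2 * m) ≤ ⟪v, c - a⟫_ℝ := by
    have h2 : ⟪c - q, c - a⟫_ℝ = ‖c - q‖ ^ 2 - ⟪c - q, a - q⟫_ℝ := by
      have h2' : c - a = (c - q) - (a - q) := by abel
      rw [h2', inner_sub_right, real_inner_self_eq_norm_sq]
    have h3 : ⟪c - q, a - q⟫_ℝ ≤ ‖a - q‖ ^ 2 / 2 := stmt8_normal hcq haA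
    have h4 : ‖a - q‖ ≤ ρ := by rw [← dist_eq_norm]; exact hfar
    have h5 : ‖a - q‖ ^ 2 ≤ ρ ^ 2 := pow_le_pow_left₀ (norm_nonneg _) h4 2
    have hX : ⟪c - q, a - q⟫_ℝ ≤ ρ ^ 2 / 2 := by linarith
    have h6 : ⟪v, c - a⟫_ℝ = m⁻¹ * ⟪c - q, c - a⟫_ℝ := by
      rw [hv, real_inner_smul_left]
    rw [h6, h2, hcqn]
    calc m - ρ ^ 2 / (2 * m) = m⁻¹ * (m ^ 2 - ρ ^ 2 / 2) := by field_simp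
      _ ≤ m⁻¹ * (m ^ 2 - ⟪c - q, a - q⟫_ℝ) := by
          apply mul_le_mul_of_nonneg_left (by linarith) (by positivity)
  have hsub : ρ ^ 2 / (2 * m) ≤ δ * r / 2 := by
    rw [hρ2, div_le_iff₀ (by positivity)]
    nlinarith [mul_le_mul_of_nonneg_left hrm (by positivity : (0:ℝ) ≤ δ * r)]
  have h7 : m - δ * r / 2 ≤ ⟪v, c - a⟫_ℝ := by linarith
  have hkey : (m + (1 - δ) * ε) ^ 2 ≤ dist c' a ^ 2 := by
    rw [dist_eq_norm, hexp]
    have hca2 : m ^ 2 ≤ ‖c - a‖ ^ 2 := pow_le_pow_left₀ hm0.le hca 2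
    nlinarith [mul_nonneg (mul_nonneg hε0.le hδ0.le) (by linarith : (0:ℝ) ≤ 2 * m - r),
      mul_nonneg (mul_nonneg hε0.le hε0.le) (by nlinarith : (0:ℝ) ≤ 2 * δ - δ ^ 2),
      mul_le_mul_of_nonneg_left h7 (by positivity : (0:ℝ) ≤ 2 * ε)]
  have hdist' : m + (1 - δ) * ε ≤ Metric.infDist c' A := by
    rw [had]
    have h0 : 0 ≤ m + (1 - δ) * ε := by nlinarith
    nlinarith [hkey, dist_nonneg (x := c') (y := a)]
  -- so t₀ + ε ∈ S, contradiction with sSup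
  have hmemS : t₀ + ε ∈ Prod.fst '' KK := by
    refine ⟨(t₀ + ε, c'), ⟨by simp only; linarith, by simp only; linarith, ?_, ?_⟩, rfl⟩
    · simp only
      calc dist c' u ≤ dist c' c + dist c u := dist_triangle _ _ _
        _ ≤ ε + t₀ := by rw [hc'c]; linarith
        _ = t₀ + ε := by ring
    · simp only
      calc r + (1 - δ) * (t₀ + ε) = (r + (1 - δ) * t₀) + (1 - δ) * ε := by ring
        _ ≤ m + (1 - δ) * ε := by linarith
        _ ≤ Metric.infDist c' A := hdist'
  have h9 := le_csSup hScomp.bddAbove hmemS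
  rw [← ht₀] at h9
  linarith

omit [ProperSpace F] in
lemma stmt8_normu {k : ℕ} (lam : Fin k → ℝ) (x : Fin k → F) :
    ‖∑ i, lam i • x i‖ ^ 2 = ∑ i, ∑ j, lam i * lam j * ⟪x i, x j⟫_ℝ := by
  rw [← real_inner_self_eq_norm_sq, sum_inner]
  refine Finset.sum_congr rfl fun i _ => ?_
  rw [real_inner_smul_left, inner_sum, Finset.mul_sum]
  refine Finset.sum_congr rfl fun j _ => ?_
  rw [real_inner_smul_right]; ring

omit [ProperSpace F] in
lemma stmt8_id1 {k : ℕ} (lam : Fin k → ℝ) (x : Fin k → F) (hsum : ∑ i, lam i = 1)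
    (c : F) :
    ∑ i, lam i * ‖x i - c‖ ^ 2 = ‖(∑ i, lam i • x i) - c‖ ^ 2 +
      (∑ i, lam i * ‖x i‖ ^ 2 - ‖∑ i, lam i • x i‖ ^ 2) := by
  have hL : ∑ i, lam i * ‖x i - c‖ ^ 2
      = ∑ i, lam i * ‖x i‖ ^ 2 - 2 * ∑ i, lam i * ⟪x i, c⟫_ℝ + (∑ i, lam i) * ‖c‖ ^ 2 := by
    rw [Finset.sum_mul, Finset.mul_sum, ← Finset.sum_sub_distrib, ← Finset.sum_add_distrib]
    refine Finset.sum_congr rfl fun i _ => ?_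
    rw [norm_sub_sq_real]; ring
  have hR : ‖(∑ i, lam i • x i) - c‖ ^ 2
      = ‖∑ i, lam i • x i‖ ^ 2 - 2 * ∑ i, lam i * ⟪x i, c⟫_ℝ + ‖c‖ ^ 2 := by
    have hic : ⟪∑ i, lam i • x i, c⟫_ℝ = ∑ i, lam i * ⟪x i, c⟫_ℝ := by
      rw [sum_inner]
      exact Finset.sum_congr rfl fun i _ => real_inner_smul_left _ _ _
    rw [norm_sub_sq_real, hic]
  rw [hL, hR, hsum]; ring

omit [ProperSpace F] in
lemma stmt8_id2 {k : ℕ} (lam : Fin k → ℝ) (x : Fin k → F) (hsum : ∑ i, lam i = 1) :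
    ∑ i, ∑ j ∈ Finset.univ.filter (fun j => i < j), lam i * lam j * ‖x i - x j‖ ^ 2
      = ∑ i, lam i * ‖x i‖ ^ 2 - ‖∑ i, lam i • x i‖ ^ 2 := by
  set f : Fin k → Fin k → ℝ := fun i j => lam i * lam j * ‖x i - x j‖ ^ 2 with hf
  have hsymm : ∀ i j, f i j = f j i := by
    intro i j; simp only [hf]; rw [norm_sub_rev]; ring
  have hdiag : ∀ i, f i i = 0 := by
    intro i; simp only [hf]; simp
  have hfilter : ∑ i, ∑ j ∈ Finset.univ.filter (fun j => i < j), f i j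
      = ∑ i, ∑ j, if i < j then f i j else 0 := by
    refine Finset.sum_congr rfl fun i _ => ?_
    rw [Finset.sum_filter]
  have hswap : ∑ i, ∑ j, (if j < i then f i j else 0)
      = ∑ i, ∑ j, if i < j then f i j else 0 := by
    rw [Finset.sum_comm]
    refine Finset.sum_congr rfl fun i _ => Finset.sum_congr rfl fun j _ => ?_
    by_cases h : i < j
    · simp [h, hsymm i j]
    · simp [h]
  have hfull : ∑ i, ∑ j, f i j
      = 2 * ∑ i, ∑ j, (if i < j then f i j else 0) := by
    have hpt : ∀ i j : Fin k, f i j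
        = (if i < j then f i j else 0) + (if j < i then f i j else 0) := by
      intro i j
      rcases lt_trichotomy i j with h | h | h
      · simp [h, asymm h]
      · subst h; simp [lt_irrefl, hdiag]
      · simp [h, asymm h, not_lt_of_gt h]
    calc ∑ i, ∑ j, f i j
        = ∑ i, ∑ j, ((if i < j then f i j else 0) + (if j < i then f i j else 0)) := by
          exact Finset.sum_congr rfl fun i _ => Finset.sum_congr rfl fun j _ => hpt i j
      _ = (∑ i, ∑ j, (if i < j then f i j else 0))
          + ∑ i, ∑ j, (if j < i then f i j else 0) := by
          rw [← Finset.sum_add_distrib]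
          exact Finset.sum_congr rfl fun i _ => Finset.sum_add_distrib
      _ = 2 * ∑ i, ∑ j, (if i < j then f i j else 0) := by rw [hswap]; ring
  have hexpand : ∑ i, ∑ j, f i j
      = 2 * (∑ i, lam i * ‖x i‖ ^ 2 - ‖∑ i, lam i • x i‖ ^ 2) := by
    have hterm : ∀ i j : Fin k, f i j
        = lam i * lam j * ‖x i‖ ^ 2 + lam i * lam j * ‖x j‖ ^ 2
          - 2 * (lam i * lam j * ⟪x i, x j⟫_ℝ) := by
      intro i j; simp only [hf]; rw [norm_sub_sq_real]; ring
    have h1 : ∑ i, ∑ j, (lam i * lam j * ‖x i‖ ^ 2 : ℝ) = ∑ i, lam i * ‖x i‖ ^ 2 := by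
      refine Finset.sum_congr rfl fun i _ => ?_
      calc ∑ j, lam i * lam j * ‖x i‖ ^ 2 = (∑ j, lam j) * (lam i * ‖x i‖ ^ 2) := by
            rw [Finset.sum_mul]; exact Finset.sum_congr rfl fun j _ => by ring
        _ = lam i * ‖x i‖ ^ 2 := by rw [hsum]; ring
    have h2 : ∑ i, ∑ j, (lam i * lam j * ‖x j‖ ^ 2 : ℝ) = ∑ j, lam j * ‖x j‖ ^ 2 := by
      rw [Finset.sum_comm]
      refine Finset.sum_congr rfl fun j _ => ?_
      rw [show ∑ i, lam i * lam j * ‖x j‖ ^ 2 = (∑ i, lam i) * (lam j * ‖x j‖ ^ 2) from by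
        rw [Finset.sum_mul]; exact Finset.sum_congr rfl fun i _ => by ring, hsum]
      ring
    have h3 : ∑ i, ∑ j, (lam i * lam j * ⟪x i, x j⟫_ℝ) = ‖∑ i, lam i • x i‖ ^ 2 :=
      (stmt8_normu lam x).symm
    calc ∑ i, ∑ j, f i j
        = ∑ i, ∑ j, (lam i * lam j * ‖x i‖ ^ 2 + lam i * lam j * ‖x j‖ ^ 2
            - 2 * (lam i * lam j * ⟪x i, x j⟫_ℝ)) :=
          Finset.sum_congr rfl fun i _ => Finset.sum_congr rfl fun j _ => hterm i j
      _ = (∑ i, ∑ j, (lam i * lam j * ‖x i‖ ^ 2 : ℝ))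
          + (∑ i, ∑ j, (lam i * lam j * ‖x j‖ ^ 2 : ℝ))
          - 2 * ∑ i, ∑ j, (lam i * lam j * ⟪x i, x j⟫_ℝ) := by
          simp only [Finset.mul_sum, ← Finset.sum_add_distrib, ← Finset.sum_sub_distrib]
      _ = 2 * (∑ i, lam i * ‖x i‖ ^ 2 - ‖∑ i, lam i • x i‖ ^ 2) := by
          rw [h1, h2, h3]; ring
  have := hfull.symm.trans hexpand
  rw [hfilter]
  linarith

end Stmt8Aux

/-- Distance from a point of the convex hull of a finite set to its
projection onto a positive reach set. -/
theorem stmt8 (d k : ℕ) (A : Set (EuclideanSpace ℝ (Fin d))) (hAne : A.Nonempty)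
    (hAcl : IsClosed A) (τ : ℝ) (hτ : 0 < τ)
    (hreach : ∀ z : EuclideanSpace ℝ (Fin d), Metric.infDist z A < τ →
      ∃! p, p ∈ A ∧ dist z p = Metric.infDist z A)
    (x : Fin k → EuclideanSpace ℝ (Fin d)) (hx : ∀ i, Metric.infDist (x i) A < τ)
    (lam : Fin k → ℝ) (hlam : ∀ i, lam i ∈ Set.Icc (0 : ℝ) 1) (hsum : ∑ i, lam i = 1)
    (u : EuclideanSpace ℝ (Fin d)) (hu : u = ∑ i, lam i • x i)
    (hdu : Metric.infDist u A < τ) :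
    ∀ p, p ∈ A → dist u p = Metric.infDist u A →
      ‖u - p‖ ≤ τ - Real.sqrt (max 0
        ((∑ i, lam i * (τ - Metric.infDist (x i) A) ^ 2) -
          ∑ i, ∑ j ∈ Finset.univ.filter (fun j => i < j),
            lam i * lam j * ‖x i - x j‖ ^ 2)) := by
  intro p hpA hpd
  set r := Metric.infDist u A with hrdef
  have hr0 : 0 ≤ r := Metric.infDist_nonneg
  have hup : ‖u - p‖ = r := by rw [← dist_eq_norm, hpd]
  set Sstat := (∑ i, lam i * (τ - Metric.infDist (x i) A) ^ 2) -
      ∑ i, ∑ j ∈ Finset.univ.filter (fun j => i < j),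
        lam i * lam j * ‖x i - x j‖ ^ 2 with hSstat
  have hcross : ∑ i, ∑ j ∈ Finset.univ.filter (fun j => i < j),
      lam i * lam j * ‖x i - x j‖ ^ 2
      = ∑ i, lam i * ‖x i‖ ^ 2 - ‖∑ i, lam i • x i‖ ^ 2 := stmt8_id2 lam x hsum
  rcases eq_or_lt_of_le hr0 with hr | hr
  · -- trivial case : u ∈ A
    have htriv : Sstat ≤ τ ^ 2 := by
      have h1 : ∑ i, lam i * (τ - Metric.infDist (x i) A) ^ 2 ≤ τ ^ 2 := by
        calc ∑ i, lam i * (τ - Metric.infDist (x i) A) ^ 2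
            ≤ ∑ i, lam i * τ ^ 2 := by
              refine Finset.sum_le_sum fun i _ => ?_
              refine mul_le_mul_of_nonneg_left ?_ (hlam i).1
              have hd0 : 0 ≤ Metric.infDist (x i) A := Metric.infDist_nonneg
              have := hx i
              exact pow_le_pow_left₀ (by linarith) (by linarith) 2
          _ = τ ^ 2 := by rw [← Finset.sum_mul, hsum, one_mul]
      have h2 : 0 ≤ ∑ i, ∑ j ∈ Finset.univ.filter (fun j => i < j),
          lam i * lam j * ‖x i - x j‖ ^ 2 := by
        refine Finset.sum_nonneg fun i _ => Finset.sum_nonneg fun j _ => ?_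
        have := (hlam i).1
        have := (hlam j).1
        positivity
      rw [hSstat]; linarith
    have hsq : Real.sqrt (max 0 Sstat) ≤ τ := by
      calc Real.sqrt (max 0 Sstat) ≤ Real.sqrt (τ ^ 2) :=
            Real.sqrt_le_sqrt (max_le (by positivity) htriv)
        _ = τ := by rw [Real.sqrt_sq hτ.le]
    rw [hup, ← hr]
    linarith
  · -- main case : 0 < r
    have hrτ : r < τ := hdu
    have hmain : Sstat ≤ (τ - r) ^ 2 := by
      refine le_of_forall_pos_le_add fun ε hε => ?_
      set δ := min (1/2 : ℝ) (ε / (4 * τ ^ 2 + 1)) with hδdef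
      set η := min ((τ - r)/2) (ε / (4 * τ + 1)) with hηdef
      have hδ0 : 0 < δ := lt_min (by norm_num) (by positivity)
      have hδ1 : δ < 1 := lt_of_le_of_lt (min_le_left _ _) (by norm_num)
      have hη0 : 0 < η := lt_min (by linarith) (by positivity)
      have hη1 : η ≤ (τ - r)/2 := min_le_left _ _
      set T := τ - r - η with hTdef
      have hT0 : 0 ≤ T := by rw [hTdef]; linarith
      have hrT : r + T < τ := by rw [hTdef]; linarith
      obtain ⟨c, hcu, hcD⟩ := stmt8_far hAcl hAne hreach u hr hT0 hrT hδ0 hδ1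
      set D := Metric.infDist c A with hD
      have hDub : D ≤ r + T := by
        calc D ≤ r + dist c u := Metric.infDist_le_infDist_add_dist
          _ ≤ r + T := by linarith
      have hDτ : D ≤ τ := by linarith
      have hD0 : 0 ≤ D := Metric.infDist_nonneg
      -- pointwise bound
      have hpt : ∀ i, (τ - Metric.infDist (x i) A) ^ 2
          ≤ ‖x i - c‖ ^ 2 + 2 * τ * (τ - D) := by
        intro i
        set di := Metric.infDist (x i) A with hdi
        have hdi0 : 0 ≤ di := Metric.infDist_nonneg
        have hdiτ : di < τ := hx i
        obtain ⟨ai, haiA, haid⟩ := hAcl.exists_infDist_eq_dist hAne (x i)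
        have hXc : D - di ≤ ‖x i - c‖ := by
          have h1 : D ≤ dist c ai := Metric.infDist_le_dist_of_mem haiA
          have h2 : dist c ai ≤ dist c (x i) + dist (x i) ai := dist_triangle _ _ _
          have h3 : dist (x i) ai = di := haid.symm
          have h4 : dist c (x i) = ‖x i - c‖ := by rw [dist_comm, dist_eq_norm]
          linarith
        have hXc0 : 0 ≤ ‖x i - c‖ := norm_nonneg _
        rcases le_or_gt di D with hcase | hcase
        · have h1 : (D - di) ^ 2 ≤ ‖x i - c‖ ^ 2 :=
            pow_le_pow_left₀ (by linarith) hXc 2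
          nlinarith [mul_nonneg (sub_nonneg.mpr hDτ) (by linarith : (0:ℝ) ≤ 2 * di)]
        · have h2 : (τ - di) ^ 2 ≤ (τ - D) ^ 2 :=
            pow_le_pow_left₀ (by linarith) (by linarith) 2
          nlinarith [sq_nonneg (‖x i - c‖), mul_nonneg (sub_nonneg.mpr hDτ)
            (by linarith : (0:ℝ) ≤ τ + D)]
      have hsumpt : ∑ i, lam i * (τ - Metric.infDist (x i) A) ^ 2
          ≤ ∑ i, lam i * ‖x i - c‖ ^ 2 + 2 * τ * (τ - D) := by
        calc ∑ i, lam i * (τ - Metric.infDist (x i) A) ^ 2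
            ≤ ∑ i, lam i * (‖x i - c‖ ^ 2 + 2 * τ * (τ - D)) :=
              Finset.sum_le_sum fun i _ =>
                mul_le_mul_of_nonneg_left (hpt i) (hlam i).1
          _ = ∑ i, lam i * ‖x i - c‖ ^ 2 + (∑ i, lam i) * (2 * τ * (τ - D)) := by
              rw [Finset.sum_mul, ← Finset.sum_add_distrib]
              exact Finset.sum_congr rfl fun i _ => by ring
          _ = ∑ i, lam i * ‖x i - c‖ ^ 2 + 2 * τ * (τ - D) := by rw [hsum]; ring
      have hid1 : ∑ i, lam i * ‖x i - c‖ ^ 2 = ‖u - c‖ ^ 2 +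
          (∑ i, lam i * ‖x i‖ ^ 2 - ‖u‖ ^ 2) := by
        rw [hu]; exact stmt8_id1 lam x hsum c
      have huc : ‖u - c‖ ^ 2 ≤ (τ - r) ^ 2 := by
        have h1 : ‖u - c‖ = dist c u := by rw [← dist_eq_norm, dist_comm]
        have h2 : ‖u - c‖ ≤ T := by rw [h1]; exact hcu
        have h3 : T ≤ τ - r := by rw [hTdef]; linarith
        exact pow_le_pow_left₀ (norm_nonneg _) (h2.trans h3) 2
      have herr : 2 * τ * (τ - D) ≤ ε := by
        have h1 : τ - D ≤ η + δ * τ := by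
          have h2 : r + (1 - δ) * T ≤ D := hcD
          have h3 : T ≤ τ := by rw [hTdef]; linarith
          nlinarith [hδ0.le]
        have h4 : 2 * τ * η ≤ ε / 2 := by
          have h5 : η ≤ ε / (4 * τ + 1) := min_le_right _ _
          rw [le_div_iff₀ (by positivity)] at h5
          nlinarith [hη0, hτ]
        have h6 : 2 * τ * (δ * τ) ≤ ε / 2 := by
          have h7 : δ ≤ ε / (4 * τ ^ 2 + 1) := min_le_right _ _
          rw [le_div_iff₀ (by positivity)] at h7
          nlinarith [hδ0, hτ]
        nlinarith [hτ]
      rw [← hu] at hcross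
      rw [hSstat, hcross]
      linarith [hsumpt, hid1, huc, herr]
    have hsq : Real.sqrt (max 0 Sstat) ≤ τ - r := by
      calc Real.sqrt (max 0 Sstat) ≤ Real.sqrt ((τ - r) ^ 2) :=
            Real.sqrt_le_sqrt (max_le (by positivity) hmain)
        _ = τ - r := Real.sqrt_sq (by linarith)
    rw [hup]
    linarith
end

section
/- Let A ⊆ ℝ^d be a nonempty closed set, and let x, y ∈ ℝ^d each have a unique nearest point in A, with π_A(y) denoting the nearest point of y. Let τ_y > 0 be such that every z ∈ ℝ^d with ‖z − π_A(y)‖ < τ_y has a unique nearest point in A (i.e., the reach of A at π_A(y) is at least τ_y), and suppose d_A(x) < τ_y. Then ⟨y − π_A(y), π_A(y) − x⟩ ≥ − ‖x − π_A(y)‖² · d_A(y) / (2τ_y) − d_A(x) · d_A(y) · (1 − d_A(x)/(2τ_y)). -/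
open Metric Set Filter Topology

noncomputable section

variable {d : ℕ}

private lemma grow {A : Set (EuclideanSpace ℝ (Fin d))} (hAne : A.Nonempty)
    (hAcl : IsClosed A) (w : EuclideanSpace ℝ (Fin d))
    (hw : ∃! p, p ∈ A ∧ dist w p = Metric.infDist w A)
    (hM : 0 < Metric.infDist w A) {c : ℝ} (hc0 : 0 ≤ c) (hc1 : c < 1)
    {h0 : ℝ} (h0pos : 0 < h0) :
    ∃ h : ℝ, 0 < h ∧ h ≤ h0 ∧ ∃ w', dist w' w ≤ h ∧
      Metric.infDist w A + c * h ≤ Metric.infDist w' A := by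
  by_contra hcon
  push_neg at hcon
  set M := Metric.infDist w A with hMdef
  obtain ⟨b, ⟨hbA, hbd⟩, hbu⟩ := hw
  set V : EuclideanSpace ℝ (Fin d) := M⁻¹ • (w - b) with hV
  have hwb : ‖w - b‖ = M := by rw [← dist_eq_norm]; exact hbd
  have hVnorm : ‖V‖ = 1 := by
    rw [hV, norm_smul, hwb, norm_inv, Real.norm_of_nonneg hM.le]
    field_simp
  set hs : ℕ → ℝ := fun n => min h0 (1 / (n + 1)) with hhs
  have hspos : ∀ n, 0 < hs n := fun n => lt_min h0pos (by positivity)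
  have hsle : ∀ n, hs n ≤ h0 := fun n => min_le_left _ _
  have hsle' : ∀ n : ℕ, hs n ≤ 1 / (n + 1) := fun n => min_le_right _ _
  have hs0 : Tendsto hs atTop (𝓝 0) := by
    apply squeeze_zero (fun n => (hspos n).le) hsle'
    exact tendsto_one_div_add_atTop_nhds_zero_nat
  have hbn : ∀ n : ℕ, ∃ p ∈ A, Metric.infDist (w + hs n • V) A = dist (w + hs n • V) p :=
    fun n => hAcl.exists_infDist_eq_dist hAne _
  choose bn hbnA hbnd using hbn
  have hdist : ∀ n, dist (w + hs n • V) w = hs n := by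
    intro n
    rw [dist_eq_norm, add_sub_cancel_left, norm_smul, hVnorm,
      Real.norm_of_nonneg (hspos n).le, mul_one]
  have hlt : ∀ n, Metric.infDist (w + hs n • V) A < M + c * hs n := by
    intro n
    exact hcon (hs n) (hspos n) (hsle n) _ ((hdist n).le)
  -- inner product bound
  have hIn : ∀ n, (inner ℝ (w - bn n) V : ℝ) < c * M := by
    intro n
    have h1 : dist (w + hs n • V) (bn n) < M + c * hs n := (hbnd n) ▸ hlt n
    have h2 : M ≤ dist w (bn n) := Metric.infDist_le_dist_of_mem (hbnA n)
    have hexp : dist (w + hs n • V) (bn n) ^ 2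
        = ‖w - bn n‖ ^ 2 + 2 * (hs n * (inner ℝ (w - bn n) V : ℝ)) + (hs n) ^ 2 := by
      rw [dist_eq_norm]
      have : w + hs n • V - bn n = (w - bn n) + hs n • V := by abel
      rw [this, norm_add_sq_real, real_inner_smul_right, norm_smul, hVnorm,
        Real.norm_of_nonneg (hspos n).le, mul_one]
    have h2' : M ^ 2 ≤ ‖w - bn n‖ ^ 2 := by
      rw [← dist_eq_norm]
      exact pow_le_pow_left₀ hM.le h2 2
    have hdn : (0:ℝ) ≤ dist (w + hs n • V) (bn n) := dist_nonneg
    have h1sq : dist (w + hs n • V) (bn n) ^ 2 < (M + c * hs n) ^ 2 :=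
      pow_lt_pow_left₀ h1 hdn two_ne_zero
    have hcsq : c ^ 2 ≤ 1 := by nlinarith
    nlinarith [hspos n, sq_nonneg (hs n), mul_pos (hspos n) (hspos n)]
  -- boundedness of bn
  have hbnball : ∀ n, bn n ∈ closedBall w (M + 2 * h0) := by
    intro n
    rw [mem_closedBall, dist_comm]
    calc dist w (bn n) ≤ dist w (w + hs n • V) + dist (w + hs n • V) (bn n) :=
          dist_triangle _ _ _
      _ ≤ hs n + (M + c * hs n) := by
          refine add_le_add ?_ ?_
          · rw [dist_comm]; exact (hdist n).le
          · exact ((hbnd n) ▸ (hlt n)).le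
      _ ≤ M + 2 * h0 := by nlinarith [hspos n, hsle n]
  obtain ⟨p, hpcl, φ, hφ, htend⟩ := tendsto_subseq_of_bounded
    (isBounded_closedBall (x := w) (r := M + 2 * h0)) hbnball
  have hpA : p ∈ A := hAcl.mem_of_tendsto htend (Eventually.of_forall fun k => hbnA _)
  have hsub0 : Tendsto (fun k => hs (φ k)) atTop (𝓝 0) :=
    hs0.comp hφ.tendsto_atTop
  have hdwp : dist w p = M := by
    have htd : Tendsto (fun k => dist w (bn (φ k))) atTop (𝓝 (dist w p)) :=
      (Continuous.tendsto (continuous_const.dist continuous_id) p).comp htend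
    have hle : ∀ k, dist w (bn (φ k)) ≤ M + 2 * hs (φ k) := by
      intro k
      calc dist w (bn (φ k)) ≤ dist w (w + hs (φ k) • V) + dist (w + hs (φ k) • V) (bn (φ k)) :=
            dist_triangle _ _ _
        _ ≤ hs (φ k) + (M + c * hs (φ k)) := by
            refine add_le_add ?_ ((hbnd _) ▸ (hlt _)).le
            rw [dist_comm]; exact (hdist _).le
        _ ≤ M + 2 * hs (φ k) := by nlinarith [hspos (φ k)]
    have htd2 : Tendsto (fun k => M + 2 * hs (φ k)) atTop (𝓝 (M + 2 * 0)) :=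
      tendsto_const_nhds.add (hsub0.const_mul 2)
    rw [mul_zero, add_zero] at htd2
    have h1 : dist w p ≤ M := le_of_tendsto_of_tendsto htd htd2 (Eventually.of_forall hle)
    have h2 : M ≤ dist w p := Metric.infDist_le_dist_of_mem hpA
    linarith
  have hpb : p = b := hbu p ⟨hpA, hdwp⟩
  have hinnertend : Tendsto (fun k => (inner ℝ (w - bn (φ k)) V : ℝ)) atTop
      (𝓝 (inner ℝ (w - p) V : ℝ)) := by
    have h1 : Tendsto (fun k => w - bn (φ k)) atTop (𝓝 (w - p)) :=
      tendsto_const_nhds.sub htend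
    exact h1.inner tendsto_const_nhds
  have hval : (inner ℝ (w - p) V : ℝ) = M := by
    rw [hpb, hV, real_inner_smul_right, real_inner_self_eq_norm_sq, hwb]
    field_simp
  have hlim : (inner ℝ (w - p) V : ℝ) ≤ c * M :=
    le_of_tendsto hinnertend (Eventually.of_forall fun k => (hIn (φ k)).le)
  rw [hval] at hlim
  nlinarith

private lemma seg_extend {A : Set (EuclideanSpace ℝ (Fin d))} (hAne : A.Nonempty)
    (hAcl : IsClosed A) {q : EuclideanSpace ℝ (Fin d)} (hq : q ∈ A)
    {τ : ℝ} (hτ : 0 < τ)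
    (hreach : ∀ z : EuclideanSpace ℝ (Fin d), dist z q < τ →
      ∃! p, p ∈ A ∧ dist z p = Metric.infDist z A)
    {y : EuclideanSpace ℝ (Fin d)} (hyq : dist y q = Metric.infDist y A)
    (hr : 0 < Metric.infDist y A)
    {t : ℝ} (ht0 : 0 ≤ t) (htτ : t < τ) :
    Metric.infDist (q + (t / Metric.infDist y A) • (y - q)) A = t := by
  set r := Metric.infDist y A with hrdef
  set z := q + (t / r) • (y - q) with hz
  have hyqnorm : ‖y - q‖ = r := by rw [← dist_eq_norm]; exact hyq
  have hzq : dist z q = t := by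
    rw [hz, dist_eq_norm, add_sub_cancel_left, norm_smul, hyqnorm, Real.norm_of_nonneg
      (div_nonneg ht0 hr.le)]
    field_simp
  have hupper : Metric.infDist z A ≤ t := hzq ▸ Metric.infDist_le_dist_of_mem hq
  by_cases hcase : t ≤ r
  · -- easy segment case
    have hyz : dist y z = r - t := by
      have : y - z = (1 - t / r) • (y - q) := by
        rw [hz, sub_smul, one_smul]
        abel
      rw [dist_eq_norm, this, norm_smul, hyqnorm, Real.norm_of_nonneg (by
        rw [sub_nonneg]; exact (div_le_one hr).mpr hcase)]
      field_simp
    have h1 : r ≤ Metric.infDist z A + dist y z := Metric.infDist_le_infDist_add_dist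
    rw [hyz] at h1
    linarith
  · push_neg at hcase
    set ρ := t - r with hρdef
    have hρ : 0 < ρ := by simp [hρdef]; linarith
    set K := closedBall y ρ with hK
    have hKc : IsCompact K := isCompact_closedBall _ _
    have hKne : K.Nonempty := ⟨y, mem_closedBall_self hρ.le⟩
    have hyK : y ∈ K := mem_closedBall_self hρ.le
    obtain ⟨wm, hwmK, hwmmax⟩ := hKc.exists_isMaxOn hKne
      ((continuous_infDist_pt A).continuousOn)
    have claim1 : ∀ c : ℝ, 0 ≤ c → c < 1 → r + c * ρ ≤ Metric.infDist wm A := by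
      intro c hc0 hc1
      obtain ⟨wc, hwcK, hwcmax⟩ := hKc.exists_isMaxOn hKne
        (f := fun w => Metric.infDist w A - c * dist w y)
        (((continuous_infDist_pt A).sub ((continuous_id.dist continuous_const).const_smul c)).continuousOn)
      have hgy : r - c * 0 ≤ Metric.infDist wc A - c * dist wc y := by
        have := hwcmax hyK
        simpa using this
      simp only [mul_zero, sub_zero] at hgy
      have hwcdy : dist wc y ≤ ρ := mem_closedBall.mp hwcK
      have hwcinf : r ≤ Metric.infDist wc A := by
        nlinarith [dist_nonneg (x := wc) (y := y)]
      have hwcq : dist wc q < τ := by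
        calc dist wc q ≤ dist wc y + dist y q := dist_triangle _ _ _
          _ ≤ ρ + r := by rw [hyq]; linarith
          _ < τ := by rw [hρdef]; linarith
      by_cases hedge : dist wc y = ρ
      · have h1 : r + c * ρ ≤ Metric.infDist wc A := by
          rw [← hedge]; linarith
        exact h1.trans (hwmmax hwcK)
      · have hlt2 : dist wc y < ρ := lt_of_le_of_ne hwcdy hedge
        exfalso
        obtain ⟨h, hpos, hle, w', hw'd, hw'inf⟩ := grow hAne hAcl wc (hreach _ hwcq)
          (lt_of_lt_of_le hr hwcinf) (c := (1 + c) / 2) (by linarith) (by linarith)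
          (h0 := ρ - dist wc y) (by linarith)
        have hw'K : w' ∈ K := by
          rw [hK, mem_closedBall]
          calc dist w' y ≤ dist w' wc + dist wc y := dist_triangle _ _ _
            _ ≤ h + dist wc y := by linarith
            _ ≤ ρ := by linarith
        have hmax := hwcmax hw'K
        simp only at hmax
        have hdy' : dist w' y ≤ dist wc y + h := by
          calc dist w' y ≤ dist w' wc + dist wc y := dist_triangle _ _ _
            _ ≤ h + dist wc y := by linarith
            _ = dist wc y + h := by ring
        have hmul : c * dist w' y ≤ c * (dist wc y + h) :=
          mul_le_mul_of_nonneg_left hdy' hc0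
        simp only [Set.mem_setOf_eq] at hmax
        nlinarith
    have claim2 : r + ρ ≤ Metric.infDist wm A := by
      by_contra hK2
      push_neg at hK2
      have hge : r ≤ Metric.infDist wm A := by
        have := claim1 0 le_rfl one_pos
        linarith
      set c := ((Metric.infDist wm A - r) / ρ + 1) / 2 with hc
      have hc0' : (Metric.infDist wm A - r) / ρ < 1 := (div_lt_one hρ).mpr (by linarith)
      have hc0 : 0 ≤ c := by
        have : 0 ≤ (Metric.infDist wm A - r) / ρ := div_nonneg (by linarith) hρ.le
        rw [hc]; linarith
      have hc1 : c < 1 := by rw [hc]; linarith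
      have hfin := claim1 c hc0 hc1
      have hcc : (Metric.infDist wm A - r) / ρ < c := by rw [hc]; linarith
      have hmul : (Metric.infDist wm A - r) / ρ * ρ < c * ρ :=
        mul_lt_mul_of_pos_right hcc hρ
      rw [div_mul_cancel₀ _ hρ.ne'] at hmul
      linarith
    -- now the equality chain
    have e1 : Metric.infDist wm A ≤ dist wm q := Metric.infDist_le_dist_of_mem hq
    have e2 : dist wm q ≤ dist wm y + r := by
      have := dist_triangle wm y q
      rw [hyq] at this
      linarith
    have e3 : dist wm y ≤ ρ := mem_closedBall.mp hwmK
    have hdwmq : dist wm q = t := by linarith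
    have hinfwm : Metric.infDist wm A = t := by linarith
    have hdwmy : dist wm y = t - r := by
      have h4 := dist_triangle wm y q
      rw [hyq, hdwmq] at h4
      linarith
    -- algebra: wm = z
    have hwmz : wm = z := by
      have hnormwq : ‖wm - q‖ = t := by rw [← dist_eq_norm]; exact hdwmq
      have hnormwy : ‖wm - y‖ = t - r := by rw [← dist_eq_norm]; exact hdwmy
      have hinner : (inner ℝ (wm - q) (y - q) : ℝ) = t * r := by
        have hexp : ‖(wm - q) - (y - q)‖ ^ 2
            = ‖wm - q‖ ^ 2 - 2 * (inner ℝ (wm - q) (y - q) : ℝ) + ‖y - q‖ ^ 2 :=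
          norm_sub_sq_real _ _
        have hwy : (wm - q) - (y - q) = wm - y := by abel
        rw [hwy, hnormwy, hnormwq, hyqnorm] at hexp
        nlinarith
      have hzero : ‖wm - q - (t / r) • (y - q)‖ ^ 2 = 0 := by
        have hexp2 : ‖(wm - q) - (t / r) • (y - q)‖ ^ 2
            = ‖wm - q‖ ^ 2 - 2 * (inner ℝ (wm - q) ((t / r) • (y - q)) : ℝ)
              + ‖(t / r) • (y - q)‖ ^ 2 := norm_sub_sq_real _ _
        rw [real_inner_smul_right, hinner, norm_smul, hyqnorm,
          Real.norm_of_nonneg (div_nonneg ht0 hr.le), hnormwq] at hexp2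
        have e7 : t / r * (t * r) = t ^ 2 := by field_simp
        have e8 : t / r * r = t := div_mul_cancel₀ t hr.ne'
        rw [hexp2, e7, e8]
        ring
      have h4 : ‖wm - q - (t / r) • (y - q)‖ = 0 := by
        have := sq_eq_zero_iff.mp hzero
        exact this
      have h5 : wm - q - (t / r) • (y - q) = 0 := norm_eq_zero.mp h4
      rw [hz]
      have : wm - (q + (t / r) • (y - q)) = wm - q - (t / r) • (y - q) := by abel
      have h6 : wm - (q + (t / r) • (y - q)) = 0 := by rw [this]; exact h5
      exact sub_eq_zero.mp h6
    rw [← hwmz]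
    exact hinfwm

/-- Extension of Federer's Theorem 4.8(7): a lower bound on
`⟨y − π_A(y), π_A(y) − x⟩` in terms of the local reach at `π_A(y)`. -/
theorem stmt9 (d : ℕ) (A : Set (EuclideanSpace ℝ (Fin d))) (hAne : A.Nonempty)
    (hAcl : IsClosed A) (x y : EuclideanSpace ℝ (Fin d))
    (hxunp : ∃! p, p ∈ A ∧ dist x p = Metric.infDist x A)
    (hyunp : ∃! p, p ∈ A ∧ dist y p = Metric.infDist y A)
    (py : EuclideanSpace ℝ (Fin d)) (hpyA : py ∈ A) (hpy : dist y py = Metric.infDist y A)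
    (τy : ℝ) (hτy : 0 < τy)
    (hlocreach : ∀ z : EuclideanSpace ℝ (Fin d), dist z py < τy →
      ∃! p, p ∈ A ∧ dist z p = Metric.infDist z A)
    (hx : Metric.infDist x A < τy) :
    (inner ℝ (y - py) (py - x) : ℝ) ≥
      -(‖x - py‖ ^ 2 * Metric.infDist y A) / (2 * τy) -
        Metric.infDist x A * Metric.infDist y A * (1 - Metric.infDist x A / (2 * τy)) := by
  obtain ⟨px, hpxA, hpxd⟩ := hAcl.exists_infDist_eq_dist hAne x
  have hr0 : 0 ≤ Metric.infDist y A := Metric.infDist_nonneg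
  have hδ0 : 0 ≤ Metric.infDist x A := Metric.infDist_nonneg
  rcases eq_or_lt_of_le hr0 with hr | hr
  · -- infDist y A = 0 : y = py and everything vanishes
    have hy : y = py := by
      have : dist y py = 0 := by rw [hpy, ← hr]
      exact dist_eq_zero.mp this
    rw [← hr, hy, sub_self]
    simp
  · -- main case
    set r := Metric.infDist y A with hrdef
    set δ := Metric.infDist x A with hδdef
    set I := (inner ℝ (y - py) (py - x) : ℝ) with hI
    set F : ℝ → ℝ := fun t => r * (δ ^ 2 - ‖x - py‖ ^ 2) / (2 * t) - r * δ with hF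
    have key : ∀ t : ℝ, max δ (τy / 2) < t → t < τy → F t ≤ I := by
      intro t hmax htτ
      have hδt : δ < t := lt_of_le_of_lt (le_max_left _ _) hmax
      have ht0 : 0 < t := lt_of_le_of_lt (le_trans (by linarith) (le_max_right δ (τy/2))) hmax
      set z := py + (t / r) • (y - py) with hz
      have hzinf : Metric.infDist z A = t :=
        seg_extend hAne hAcl hpyA hτy hlocreach hpy hr ht0.le htτ
      have h1 : t ≤ dist z px := hzinf ▸ Metric.infDist_le_dist_of_mem hpxA
      have h2 : dist z px ≤ dist z x + dist x px := dist_triangle _ _ _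
      have h3 : t - δ ≤ dist z x := by rw [hpxd] at *; linarith
      have h4 : (t - δ) ^ 2 ≤ dist z x ^ 2 :=
        pow_le_pow_left₀ (by linarith) h3 2
      have hnorm : dist z x ^ 2
          = ‖py - x‖ ^ 2 + 2 * (t / r * I) + (t / r) ^ 2 * r ^ 2 := by
        rw [dist_eq_norm]
        have hzx : z - x = (py - x) + (t / r) • (y - py) := by rw [hz]; abel
        rw [hzx, norm_add_sq_real, real_inner_smul_right, norm_smul,
          Real.norm_of_nonneg (div_nonneg ht0.le hr.le)]
        have hyp : ‖y - py‖ = r := by rw [← dist_eq_norm]; exact hpy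
        rw [hyp, real_inner_comm, ← hI]
        ring
      have htr : (t / r) ^ 2 * r ^ 2 = t ^ 2 := by field_simp
      rw [htr] at hnorm
      have hxpy : ‖py - x‖ = ‖x - py‖ := norm_sub_rev _ _
      rw [hxpy] at hnorm
      -- (t-δ)^2 ≤ ‖x-py‖^2 + 2*(t/r)*I + t^2
      have h5 : (t - δ) ^ 2 ≤ ‖x - py‖ ^ 2 + 2 * (t / r * I) + t ^ 2 := by
        rw [← hnorm]; exact h4
      -- deduce F t ≤ I
      show r * (δ ^ 2 - ‖x - py‖ ^ 2) / (2 * t) - r * δ ≤ I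
      have h6 : δ ^ 2 - 2 * t * δ - ‖x - py‖ ^ 2 ≤ 2 * (t / r) * I := by nlinarith
      have h7 : r * (δ ^ 2 - 2 * t * δ - ‖x - py‖ ^ 2) / (2 * t) ≤ I := by
        rw [div_le_iff₀ (by linarith)]
        have := mul_le_mul_of_nonneg_left h6 hr.le
        calc r * (δ ^ 2 - 2 * t * δ - ‖x - py‖ ^ 2) ≤ r * (2 * (t / r) * I) := this
          _ = I * (2 * t) := by field_simp
      have h8 : r * (δ ^ 2 - ‖x - py‖ ^ 2) / (2 * t) - r * δ
          = r * (δ ^ 2 - 2 * t * δ - ‖x - py‖ ^ 2) / (2 * t) := by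
        field_simp
        ring
      rw [h8]
      exact h7
    -- pass to the limit t → τy⁻
    have hτne : (2 : ℝ) * τy ≠ 0 := by positivity
    have hcont : Tendsto F (nhdsWithin τy (Set.Iio τy)) (nhds (F τy)) := by
      apply tendsto_nhdsWithin_of_tendsto_nhds
      apply Tendsto.sub _ tendsto_const_nhds
      exact (tendsto_const_nhds.div (by
        exact tendsto_const_nhds.mul tendsto_id) hτne)
    have hmaxlt : max δ (τy / 2) < τy := max_lt hx (by linarith)
    have hev : ∀ᶠ t in nhdsWithin τy (Set.Iio τy), F t ≤ I := by
      filter_upwards [Ioo_mem_nhdsLT hmaxlt] with t ht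
      exact key t ht.1 ht.2
    have hfin : F τy ≤ I := le_of_tendsto hcont hev
    have hgoal : -(‖x - py‖ ^ 2 * r) / (2 * τy) - δ * r * (1 - δ / (2 * τy)) = F τy := by
      show _ = r * (δ ^ 2 - ‖x - py‖ ^ 2) / (2 * τy) - r * δ
      field_simp
      ring
    rw [ge_iff_le, hgoal]
    exact hfin

end
end

section
/- Let A ⊆ ℝ^d be a nonempty closed set, and let x, y ∈ ℝ^d each have a unique nearest point in A, with π_A(y) denoting the nearest point of y. Let τ_y > 0 be such that every z ∈ ℝ^d with ‖z − π_A(y)‖ < τ_y has a unique nearest point in A, and suppose d_A(x) < τ_y and d_A(y) < τ_y. Then ‖x − π_A(y)‖ ≤ √( (τ_y / (τ_y − d_A(y))) · ( ‖x − y‖² − d_A(y) · ( d_A(y) − 2 d_A(x) + d_A(x)²/τ_y ) ) ). -/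
open Metric Set Filter
open scoped RealInnerProductSpace Topology

variable {E : Type*} [NormedAddCommGroup E] [InnerProductSpace ℝ E] [ProperSpace E]

/-- Gap lemma: away from the unique nearest point, distances to `A` are bounded away
from the infimum distance. -/
lemma stmt10_gap (A : Set E) (hAcl : IsClosed A) (z₀ q₀ : E)
    (huniq : ∀ a ∈ A, dist z₀ a = Metric.infDist z₀ A → a = q₀)
    (η : ℝ) (hη : 0 < η) :
    ∃ β > 0, ∀ a ∈ A, η ≤ dist a q₀ → Metric.infDist z₀ A + β ≤ dist z₀ a := by
  set δ₀ := Metric.infDist z₀ A with hδ₀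
  set S := (A ∩ {a | η ≤ dist a q₀}) ∩ Metric.closedBall z₀ (δ₀ + 1) with hSdef
  have hSclosed : IsClosed (A ∩ {a | η ≤ dist a q₀}) :=
    hAcl.inter (isClosed_le continuous_const (continuous_id.dist continuous_const))
  have hScompact : IsCompact S := (isCompact_closedBall z₀ (δ₀ + 1)).inter_left hSclosed
  by_cases hSne : S.Nonempty
  · obtain ⟨a₀, ha₀S, hmin⟩ := hScompact.exists_isMinOn hSne
      (Continuous.continuousOn (f := fun a => dist z₀ a) (continuous_const.dist continuous_id))
    have ha₀A : a₀ ∈ A := ha₀S.1.1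
    have ha₀η : η ≤ dist a₀ q₀ := ha₀S.1.2
    have hlt : δ₀ < dist z₀ a₀ := by
      rcases lt_or_eq_of_le (Metric.infDist_le_dist_of_mem ha₀A) with h | h
      · exact h
      · exact absurd (huniq a₀ ha₀A h.symm) (by
          intro hcon
          rw [hcon] at ha₀η
          simp at ha₀η
          linarith)
    refine ⟨dist z₀ a₀ - δ₀, by linarith, ?_⟩
    intro a haA haη
    by_cases hball : a ∈ Metric.closedBall z₀ (δ₀ + 1)
    · have : a ∈ S := ⟨⟨haA, haη⟩, hball⟩
      have h3 : dist z₀ a₀ ≤ dist z₀ a := hmin this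
      linarith [h3]
    · have h1 : δ₀ + 1 < dist a z₀ := by
        simpa [Metric.mem_closedBall] using hball
      have h2 : dist z₀ a₀ ≤ δ₀ + 1 := by
        have := ha₀S.2
        simpa [Metric.mem_closedBall, dist_comm] using this
      rw [dist_comm] at h1
      linarith
  · refine ⟨1, one_pos, ?_⟩
    intro a haA haη
    have : a ∉ S := fun h => hSne ⟨a, h⟩
    have hball : a ∉ Metric.closedBall z₀ (δ₀ + 1) := by
      intro hb
      exact this ⟨⟨haA, haη⟩, hb⟩
    have h1 : δ₀ + 1 < dist a z₀ := by
      simpa [Metric.mem_closedBall] using hball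
    rw [dist_comm] at h1
    linarith

set_option maxHeartbeats 1000000 in
/-- Key lemma (Federer's normal extension): the open ball of radius `τ'` tangent to `A`
at `p` in the direction of `y - p` misses `A`. -/
lemma stmt10_key (A : Set E) (hAne : A.Nonempty) (hAcl : IsClosed A)
    (p y : E) (hpA : p ∈ A) (hpy : dist y p = Metric.infDist y A)
    (r : ℝ) (hr : r = dist y p) (hrpos : 0 < r)
    (τ τ' : ℝ) (hτ'1 : r < τ') (hτ'2 : τ' < τ)
    (U : ∀ z : E, dist z p < τ → ∃! q, q ∈ A ∧ dist z q = Metric.infDist z A) :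
    ∀ a ∈ A, τ' ≤ dist (p + τ' • (r⁻¹ • (y - p))) a := by
  have hτ'pos : 0 < τ' := lt_trans hrpos hτ'1
  -- Step 1: for each λ ∈ (0,1) there is a boundary point with large infDist
  have step1 : ∀ l : ℝ, 0 < l → l < 1 →
      ∃ z, dist z p = τ' ∧ r + l * dist z y ≤ Metric.infDist z A := by
    intro l hl0 hl1
    have hcont : Continuous (fun z : E => Metric.infDist z A - l * dist z y) :=
      (continuous_infDist_pt A).sub (continuous_const.mul (continuous_id.dist continuous_const))
    obtain ⟨z₀, hz₀K, hmax⟩ := (isCompact_closedBall p τ').exists_isMaxOn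
      ⟨p, mem_closedBall_self hτ'pos.le⟩ hcont.continuousOn
    have hyK : y ∈ Metric.closedBall p τ' := by
      simpa [Metric.mem_closedBall] using le_of_lt (hr ▸ hτ'1)
    have hψy : Metric.infDist y A - l * dist y y ≤
        Metric.infDist z₀ A - l * dist z₀ y := hmax hyK
    have hlow : r + l * dist z₀ y ≤ Metric.infDist z₀ A := by
      have h1 : Metric.infDist y A = r := by rw [hr, hpy]
      simp only [dist_self, mul_zero, sub_zero] at hψy
      linarith
    have hδ₀pos : 0 < Metric.infDist z₀ A := by
      have : 0 ≤ l * dist z₀ y := mul_nonneg hl0.le dist_nonneg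
      linarith
    refine ⟨z₀, ?_, hlow⟩
    -- it remains to show the max is on the boundary sphere
    by_contra hne
    have hz₀lt : dist z₀ p < τ' := lt_of_le_of_ne (by simpa [Metric.mem_closedBall] using hz₀K) hne
    -- the unique nearest point of z₀
    obtain ⟨q₀, hq₀A, hq₀d⟩ := hAcl.exists_infDist_eq_dist hAne z₀
    obtain ⟨w, _, hwu⟩ := U z₀ (lt_trans hz₀lt hτ'2)
    have huniq : ∀ a ∈ A, dist z₀ a = Metric.infDist z₀ A → a = q₀ := by
      intro a haA had
      have h1 := hwu a ⟨haA, had⟩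
      have h2 := hwu q₀ ⟨hq₀A, hq₀d.symm⟩
      rw [h1, h2]
    set δ₀ := Metric.infDist z₀ A with hδ₀def
    have hzq₀ : ‖z₀ - q₀‖ = δ₀ := by rw [← dist_eq_norm, hq₀d]
    set u : E := δ₀⁻¹ • (z₀ - q₀) with hudef
    have hu1 : ‖u‖ = 1 := by
      rw [hudef, norm_smul, hzq₀, Real.norm_eq_abs, abs_of_pos (inv_pos.mpr hδ₀pos)]
      field_simp
    set η := δ₀ * (1 - l) / 2 with hηdef
    have hηpos : 0 < η := by
      apply div_pos (mul_pos hδ₀pos (by linarith)) two_pos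
    obtain ⟨β, hβpos, hgap⟩ := stmt10_gap A hAcl z₀ q₀ huniq η hηpos
    set ε := min (τ' - dist z₀ p) (β / 4) with hεdef
    have hεpos : 0 < ε := lt_min (by linarith) (by linarith)
    have hε1 : ε ≤ τ' - dist z₀ p := min_le_left _ _
    have hε2 : ε ≤ β / 4 := min_le_right _ _
    set z₁ := z₀ + ε • u with hz₁def
    have hz₁z₀ : dist z₁ z₀ = ε := by
      rw [hz₁def, dist_eq_norm]
      simp [norm_smul, hu1, Real.norm_eq_abs, abs_of_pos hεpos]
    have hz₁K : z₁ ∈ Metric.closedBall p τ' := by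
      have h := dist_triangle z₁ z₀ p
      rw [hz₁z₀] at h
      simp only [Metric.mem_closedBall]
      linarith
    -- upper bound on infDist z₁ A from maximality
    have hub : Metric.infDist z₁ A ≤ δ₀ + l * ε := by
      have h1 : Metric.infDist z₁ A - l * dist z₁ y ≤ δ₀ - l * dist z₀ y := hmax hz₁K
      have h2 : dist z₁ y ≤ ε + dist z₀ y := by
        have := dist_triangle z₁ z₀ y
        rw [hz₁z₀] at this
        linarith
      nlinarith [hl0.le]
    -- nearest point of z₁
    obtain ⟨q₁, hq₁A, hq₁d⟩ := hAcl.exists_infDist_eq_dist hAne z₁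
    have hq₁close : dist q₁ q₀ < η := by
      by_contra hcon
      push_neg at hcon
      have h1 := hgap q₁ hq₁A hcon
      have h2 : dist z₀ q₁ ≤ dist z₀ z₁ + dist z₁ q₁ := dist_triangle _ _ _
      rw [dist_comm z₀ z₁, hz₁z₀, ← hq₁d] at h2
      have h3 : (1 + l) * ε < β := by nlinarith
      nlinarith [hub]
    -- quantitative lower bound on dist z₁ q₁
    have hinner1 : ⟪u, z₀ - q₀⟫ = δ₀ := by
      rw [hudef, real_inner_smul_left, real_inner_self_eq_norm_sq, hzq₀]
      field_simp
    have hinner2 : -η ≤ ⟪u, q₀ - q₁⟫ := by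
      have h1 := abs_real_inner_le_norm u (q₀ - q₁)
      rw [hu1, one_mul, ← dist_eq_norm] at h1
      have := abs_le.mp h1
      rw [dist_comm q₀ q₁] at this
      linarith [this.1, hq₁close]
    have hinner : δ₀ - η ≤ ⟪u, z₀ - q₁⟫ := by
      have : z₀ - q₁ = (z₀ - q₀) + (q₀ - q₁) := by abel
      rw [this, inner_add_right, hinner1]
      linarith
    have hzq₁ : δ₀ ≤ ‖z₀ - q₁‖ := by
      rw [← dist_eq_norm]
      exact Metric.infDist_le_dist_of_mem hq₁A
    have hsq : ‖z₁ - q₁‖ ^ 2 = ‖z₀ - q₁‖ ^ 2 + 2 * ε * ⟪u, z₀ - q₁⟫ + ε ^ 2 := by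
      have h1 : z₁ - q₁ = (z₀ - q₁) + ε • u := by rw [hz₁def]; abel
      rw [h1, norm_add_sq_real, real_inner_smul_right, norm_smul, Real.norm_eq_abs,
        abs_of_pos hεpos, hu1]
      rw [real_inner_comm u (z₀ - q₁)]
      ring
    have hfin1 : ‖z₁ - q₁‖ ^ 2 ≤ (δ₀ + l * ε) ^ 2 := by
      have h1 : ‖z₁ - q₁‖ = dist z₁ q₁ := (dist_eq_norm _ _).symm
      have h2 : dist z₁ q₁ ≤ δ₀ + l * ε := by rw [← hq₁d]; exact hub
      nlinarith [norm_nonneg (z₁ - q₁), dist_nonneg (x := z₁) (y := q₁)]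
    have hfin2 : δ₀ ^ 2 + 2 * ε * (δ₀ - η) + ε ^ 2 ≤ ‖z₁ - q₁‖ ^ 2 := by
      rw [hsq]
      nlinarith [hεpos]
    rw [hηdef] at hfin2
    have key1 : 0 < ε * δ₀ * (1 - l) :=
      mul_pos (mul_pos hεpos hδ₀pos) (by linarith)
    have hl2 : 0 ≤ 1 - l ^ 2 := by nlinarith
    have key2 : 0 ≤ ε * ε * (1 - l ^ 2) := mul_nonneg (mul_nonneg hεpos.le hεpos.le) hl2
    nlinarith [hfin1, hfin2, key1, key2]
  -- Step 2: conclude using the boundary points and λ → 1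
  intro a ha
  set ν : E := r⁻¹ • (y - p) with hνdef
  set c : E := p + τ' • ν with hcdef
  have hrne : r ≠ 0 := ne_of_gt hrpos
  have hyp : ‖y - p‖ = r := by rw [← dist_eq_norm, hr]
  have hν1 : ‖ν‖ = 1 := by
    rw [hνdef, norm_smul, Real.norm_eq_abs, abs_of_pos (inv_pos.mpr hrpos), hyp]
    field_simp
  have key2 : ∀ l : ℝ, 0 < l → l < 1 →
      r + l * (τ' - r) - Real.sqrt ((τ'/r) * ((τ'-r)^2/l^2 - (τ'-r)^2)) ≤ dist c a := by
    intro l hl0 hl1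
    obtain ⟨z, hzp, hzlow⟩ := step1 l hl0 hl1
    set m := dist z y with hmdef
    have hm0 : 0 ≤ m := dist_nonneg
    have hm1 : τ' - r ≤ m := by
      have := dist_triangle z y p
      rw [← hr, ← hmdef, hzp] at this
      linarith
    have hδle : Metric.infDist z A ≤ τ' := by
      rw [← hzp]
      exact Metric.infDist_le_dist_of_mem hpA
    have hm2 : l * m ≤ τ' - r := by linarith
    -- inner product identity
    have hzpnorm : ‖z - p‖ = τ' := by rw [← dist_eq_norm, hzp]
    have hip : 2 * r * ⟪z - p, ν⟫ = τ'^2 + r^2 - m^2 := by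
      have e2 := norm_sub_sq_real (z - p) (y - p)
      have e3 : (z - p) - (y - p) = z - y := by abel
      rw [e3, hzpnorm, hyp, ← dist_eq_norm, ← hmdef] at e2
      have e4 : ⟪z - p, ν⟫ = r⁻¹ * ⟪z - p, y - p⟫ := by
        rw [hνdef, real_inner_smul_right]
      rw [e4]
      field_simp
      nlinarith [e2]
    -- distance from z to the tangent ball center
    have hc2 : r * (dist z c)^2 = τ' * (m^2 - (τ'-r)^2) := by
      have e1 : z - c = (z - p) - τ' • ν := by rw [hcdef]; abel
      have e2 := norm_sub_sq_real (z - p) (τ' • ν)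
      rw [norm_smul, Real.norm_eq_abs, abs_of_pos hτ'pos, hν1, real_inner_smul_right] at e2
      have e5 : dist z c = ‖z - c‖ := dist_eq_norm _ _
      rw [e5, e1, e2, hzpnorm]
      nlinarith [hip]
    have hm2sq : m^2 ≤ (τ'-r)^2 / l^2 := by
      rw [le_div_iff₀ (by positivity : (0:ℝ) < l^2)]
      nlinarith [hm2, mul_nonneg hl0.le hm0]
    have hub2 : (dist z c)^2 ≤ (τ'/r) * ((τ'-r)^2/l^2 - (τ'-r)^2) := by
      rw [div_mul_eq_mul_div, le_div_iff₀ hrpos]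
      nlinarith [hc2, mul_nonneg hτ'pos.le (sub_nonneg.mpr hm2sq)]
    have hdzc : dist z c ≤ Real.sqrt ((τ'/r) * ((τ'-r)^2/l^2 - (τ'-r)^2)) := by
      calc dist z c = Real.sqrt ((dist z c)^2) := (Real.sqrt_sq dist_nonneg).symm
        _ ≤ _ := Real.sqrt_le_sqrt hub2
    have h1 : Metric.infDist z A ≤ dist z a := Metric.infDist_le_dist_of_mem ha
    have h2 : dist z a ≤ dist z c + dist c a := dist_triangle _ _ _
    have h3 : l * (τ' - r) ≤ l * m := mul_le_mul_of_nonneg_left hm1 hl0.le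
    linarith
  -- limit λ → 1⁻
  have hlim : Filter.Tendsto
      (fun l : ℝ => r + l * (τ' - r) - Real.sqrt ((τ'/r) * ((τ'-r)^2/l^2 - (τ'-r)^2)))
      (𝓝[<] (1:ℝ)) (𝓝 τ') := by
    have hc : ContinuousAt
        (fun l : ℝ => r + l * (τ' - r) - Real.sqrt ((τ'/r) * ((τ'-r)^2/l^2 - (τ'-r)^2))) 1 := by
      apply ContinuousAt.sub
      · exact continuousAt_const.add (continuousAt_id.mul continuousAt_const)
      · apply Real.continuous_sqrt.continuousAt.comp
        apply ContinuousAt.mul continuousAt_const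
        exact (ContinuousAt.div continuousAt_const (continuousAt_id.pow 2)
          (by norm_num)).sub continuousAt_const
    have hval : r + (1:ℝ) * (τ' - r) - Real.sqrt ((τ'/r) * ((τ'-r)^2/(1:ℝ)^2 - (τ'-r)^2)) = τ' := by
      norm_num
    have := hc.continuousWithinAt (s := Set.Iio (1:ℝ))
    rw [ContinuousWithinAt] at this
    rw [hval] at this
    exact this
  have hev : ∀ᶠ l in 𝓝[<] (1:ℝ),
      r + l * (τ' - r) - Real.sqrt ((τ'/r) * ((τ'-r)^2/l^2 - (τ'-r)^2)) ≤ dist c a := by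
    filter_upwards [eventually_nhdsWithin_of_eventually_nhds
      (eventually_gt_nhds (by norm_num : (0:ℝ) < 1)), self_mem_nhdsWithin] with l hl0 hl1
    exact key2 l hl0 hl1
  exact le_of_tendsto hlim hev


set_option maxHeartbeats 1000000 in
/-- A bound on `‖x − π_A(y)‖` in terms of `‖x − y‖`, `d_A(x)`, `d_A(y)`
and the local reach `τ_y` at `π_A(y)` (modification of Federer's Theorem 4.8(8)). -/
theorem stmt10 (d : ℕ) (A : Set (EuclideanSpace ℝ (Fin d))) (hAne : A.Nonempty)
    (hAcl : IsClosed A) (x y : EuclideanSpace ℝ (Fin d))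
    (hxunp : ∃! p, p ∈ A ∧ dist x p = Metric.infDist x A)
    (hyunp : ∃! p, p ∈ A ∧ dist y p = Metric.infDist y A)
    (py : EuclideanSpace ℝ (Fin d)) (hpyA : py ∈ A) (hpy : dist y py = Metric.infDist y A)
    (τy : ℝ) (hτy : 0 < τy)
    (hlocreach : ∀ z : EuclideanSpace ℝ (Fin d), dist z py < τy →
      ∃! p, p ∈ A ∧ dist z p = Metric.infDist z A)
    (hx : Metric.infDist x A < τy) (hy : Metric.infDist y A < τy) :
    ‖x - py‖ ≤ Real.sqrt ((τy / (τy - Metric.infDist y A)) *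
      (‖x - y‖ ^ 2 - Metric.infDist y A *
        (Metric.infDist y A - 2 * Metric.infDist x A + Metric.infDist x A ^ 2 / τy))) := by
  set r := Metric.infDist y A with hrdef
  set s := Metric.infDist x A with hsdef
  have hr0 : 0 ≤ r := Metric.infDist_nonneg
  have hs0 : 0 ≤ s := Metric.infDist_nonneg
  rcases eq_or_lt_of_le hr0 with hreq | hrpos
  · -- degenerate case r = 0 : py = y
    have hpy0 : dist y py = 0 := by rw [hpy, ← hreq]
    have hyy : y = py := by rwa [dist_eq_zero] at hpy0
    rw [← hreq, ← hyy]
    have h1 : τy / (τy - 0) = 1 := by rw [sub_zero, div_self (ne_of_gt hτy)]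
    rw [h1]
    rw [one_mul, zero_mul, sub_zero, Real.sqrt_sq (norm_nonneg _)]
  · -- main case r > 0
    obtain ⟨q, hqA, hqd⟩ := hAcl.exists_infDist_eq_dist hAne x
    have hxq : dist x q = s := hqd.symm
    set u := ‖x - py‖ with hudef
    have hu0 : 0 ≤ u := norm_nonneg _
    have hypynorm : ‖y - py‖ = r := by rw [← dist_eq_norm, hpy]
    set ν : EuclideanSpace ℝ (Fin d) := r⁻¹ • (y - py) with hνdef
    have hν1 : ‖ν‖ = 1 := by
      rw [hνdef, norm_smul, Real.norm_eq_abs, abs_of_pos (inv_pos.mpr hrpos), hypynorm]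
      field_simp
    set M := max r s with hMdef
    have hM : M < τy := max_lt hy hx
    set B := ‖x - y‖ ^ 2 with hBdef
    -- the quantitative inequality for each τ' ∈ (M, τy)
    have main : ∀ τ' : ℝ, M < τ' → τ' < τy →
        u ^ 2 ≤ (τ' * B - τ' * r^2 + 2 * τ' * r * s - r * s^2) / (τ' - r) := by
      intro τ' hM' hτ'2
      have hrτ' : r < τ' := lt_of_le_of_lt (le_max_left _ _) hM'
      have hsτ' : s < τ' := lt_of_le_of_lt (le_max_right _ _) hM'
      have hτ'pos : 0 < τ' := lt_of_le_of_lt hr0 hrτ'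
      have hball := stmt10_key A hAne hAcl py y hpyA hpy r hpy.symm hrpos τy τ' hrτ' hτ'2
        hlocreach
      set c := py + τ' • ν with hcdef
      have hcq : τ' ≤ dist c q := hball q hqA
      have hxc : τ' - s ≤ dist x c := by
        have h1 : dist c q ≤ dist c x + dist x q := dist_triangle _ _ _
        rw [hxq] at h1
        rw [dist_comm x c]
        linarith
      -- inner product identity
      have hxpynorm : ‖x - py‖ = u := rfl
      have hip : 2 * r * ⟪x - py, ν⟫ = u^2 + r^2 - B := by
        have e2 := norm_sub_sq_real (x - py) (y - py)
        have e3 : (x - py) - (y - py) = x - y := by abel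
        rw [e3, hxpynorm, hypynorm] at e2
        have e4 : ⟪x - py, ν⟫ = r⁻¹ * ⟪x - py, y - py⟫ := by
          rw [hνdef, real_inner_smul_right]
        rw [e4, show 2 * r * (r⁻¹ * ⟪x - py, y - py⟫) = 2 * ⟪x - py, y - py⟫ from by
          rw [← mul_assoc, mul_assoc 2 r r⁻¹, mul_inv_cancel₀ (ne_of_gt hrpos), mul_one]]
        linarith [e2, hBdef]
      have hc2 : r * (dist x c)^2 = r * u^2 - τ' * (u^2 + r^2 - B) + r * τ'^2 := by
        have e1 : x - c = (x - py) - τ' • ν := by rw [hcdef]; abel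
        have e2 := norm_sub_sq_real (x - py) (τ' • ν)
        rw [norm_smul, Real.norm_eq_abs, abs_of_pos hτ'pos, hν1, real_inner_smul_right] at e2
        have e5 : dist x c = ‖x - c‖ := dist_eq_norm _ _
        rw [e5, e1, e2, hxpynorm]
        nlinarith [hip]
      have hsq : (τ' - s)^2 ≤ (dist x c)^2 := by
        nlinarith [hxc, hsτ']
      have hnum : (τ' - r) * u^2 ≤ τ' * B - τ' * r^2 + 2 * τ' * r * s - r * s^2 := by
        nlinarith [hc2, hsq, hrpos]
      rw [le_div_iff₀ (by linarith : (0:ℝ) < τ' - r)]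
      linarith [hnum]
    -- take the limit τ' → τy
    have hlim : Filter.Tendsto
        (fun t : ℝ => (t * B - t * r^2 + 2 * t * r * s - r * s^2) / (t - r))
        (𝓝[<] τy) (𝓝 ((τy * B - τy * r^2 + 2 * τy * r * s - r * s^2) / (τy - r))) := by
      have hc : ContinuousAt
          (fun t : ℝ => (t * B - t * r^2 + 2 * t * r * s - r * s^2) / (t - r)) τy := by
        apply ContinuousAt.div
        · fun_prop
        · fun_prop
        · have : r < τy := hy
          intro hcon
          rw [sub_eq_zero] at hcon
          exact absurd hcon.symm (ne_of_lt this)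
      exact hc.continuousWithinAt
    have hev : ∀ᶠ t in 𝓝[<] τy,
        u ^ 2 ≤ (t * B - t * r^2 + 2 * t * r * s - r * s^2) / (t - r) := by
      filter_upwards [eventually_nhdsWithin_of_eventually_nhds (eventually_gt_nhds hM),
        self_mem_nhdsWithin] with t ht1 ht2
      exact main t ht1 ht2
    have hfinal : u ^ 2 ≤ (τy * B - τy * r^2 + 2 * τy * r * s - r * s^2) / (τy - r) :=
      ge_of_tendsto hlim hev
    have heq : (τy / (τy - r)) * (B - r * (r - 2 * s + s^2 / τy)) =
        (τy * B - τy * r^2 + 2 * τy * r * s - r * s^2) / (τy - r) := by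
      have h1 : τy - r ≠ 0 := by
        have : r < τy := hy
        intro hcon; rw [sub_eq_zero] at hcon; exact absurd hcon.symm (ne_of_lt this)
      field_simp
      ring
    calc u = Real.sqrt (u ^ 2) := (Real.sqrt_sq hu0).symm
      _ ≤ Real.sqrt ((τy / (τy - r)) * (B - r * (r - 2 * s + s^2 / τy))) := by
          apply Real.sqrt_le_sqrt
          rw [heq]
          exact hfinal
end

section
/- Let A ⊆ ℝ^d be a nonempty closed set with reach at least τ > 0 (every z with infDist(z, A) < τ has a unique nearest point in A). Let x_1, …, x_k ∈ ℝ^d with d_A(x_i) < τ for all i, let λ_1, …, λ_k ∈ [0,1] with Σ λ_i = 1, and set u := Σ_i λ_i x_i. Let x ∈ ℝ^d with d_A(x) < τ satisfy ‖x − x_i‖ < √( (τ − d_A(x))² + (τ − d_A(x_i))² ) for all i, and suppose additionally that Σ_i λ_i ( ‖x_i − u‖² + 2τ d_A(x_i) − d_A(x_i)² ) ≤ ‖x − u‖² + 2τ d_A(x) − d_A(x)². Then ‖x − π_A(u)‖² ≤ Σ_i λ_i ( ‖x_i − x‖² + d_A(x_i)(2τ − d_A(x_i)) ) − ( (τ −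 d_A(x))² + Σ_i λ_i ( (τ − d_A(x_i))² − ‖x_i − x‖² ) ) · ( τ / √( Σ_i λ_i (τ − d_A(x_i))² − Σ_i λ_i ‖x_i − u‖² ) − 1 ). -/
open Metric Filter Topology
open scoped RealInnerProductSpace

set_option maxHeartbeats 1000000 in
private lemma keystep {d : ℕ} {A : Set (EuclideanSpace ℝ (Fin d))} (hAne : A.Nonempty)
    (hAcl : IsClosed A) {τ : ℝ}
    (hreach : ∀ z : EuclideanSpace ℝ (Fin d), Metric.infDist z A < τ →
      ∃! p, p ∈ A ∧ dist z p = Metric.infDist z A)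
    (z₀ q₀ : EuclideanSpace ℝ (Fin d)) (hq₀ : q₀ ∈ A)
    (hdq : dist z₀ q₀ = Metric.infDist z₀ A)
    (h0 : 0 < Metric.infDist z₀ A) (hlt : Metric.infDist z₀ A < τ)
    {c : ℝ} (hc0 : 0 ≤ c) (hc1 : c < 1) :
    ∃ h₀ > 0, ∀ h : ℝ, 0 < h → h ≤ h₀ →
      Metric.infDist z₀ A + c * h ≤
        Metric.infDist (z₀ + (h / Metric.infDist z₀ A) • (z₀ - q₀)) A := by
  set D := Metric.infDist z₀ A with hD
  by_contra hcon
  push_neg at hcon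
  set ε : ℝ := min 1 ((τ - D) / 2) with hε
  have hεpos : 0 < ε := lt_min one_pos (by linarith)
  have hsel : ∀ n : ℕ, ∃ h : ℝ, 0 < h ∧ h ≤ ε / (n + 1) ∧
      Metric.infDist (z₀ + (h / D) • (z₀ - q₀)) A < D + c * h := by
    intro n
    have hd : (0:ℝ) < (n:ℝ) + 1 := by positivity
    obtain ⟨h, h1, h2, h3⟩ := hcon (ε / (n + 1)) (div_pos hεpos hd)
    exact ⟨h, h1, h2, h3⟩
  choose h hpos hle hbad using hsel
  have hle1 : ∀ n, h n ≤ ε := by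
    intro n
    calc h n ≤ ε / (n+1) := hle n
    _ ≤ ε / 1 := by
        apply div_le_div_of_nonneg_left hεpos.le one_pos
        have hn0 : (0:ℝ) ≤ (n:ℝ) := Nat.cast_nonneg n
        linarith
    _ = ε := div_one ε
  set z : ℕ → EuclideanSpace ℝ (Fin d) := fun n => z₀ + (h n / D) • (z₀ - q₀) with hz
  have hnormz0q0 : ‖z₀ - q₀‖ = D := by rw [← dist_eq_norm]; exact hdq
  have hdistz : ∀ n, dist (z n) z₀ = h n := by
    intro n
    rw [hz]
    simp only [dist_eq_norm, add_sub_cancel_left]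
    rw [norm_smul, hnormz0q0, Real.norm_eq_abs, abs_of_pos (div_pos (hpos n) h0)]
    field_simp
  -- nearest points of z n
  obtain hq := fun n => hAcl.exists_infDist_eq_dist hAne (z n)
  choose q hqA hqd using hq
  have hqbound : ∀ n, q n ∈ A ∩ closedBall z₀ (D + 2) := by
    intro n
    refine ⟨hqA n, mem_closedBall.mpr ?_⟩
    have h1 : dist (q n) z₀ ≤ dist (q n) (z n) + dist (z n) z₀ := dist_triangle _ _ _
    have h2 : dist (z n) (q n) = Metric.infDist (z n) A := (hqd n).symm
    have h3 : Metric.infDist (z n) A < D + c * h n := hbad n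
    have h4 : h n ≤ 1 := le_trans (hle1 n) (min_le_left _ _)
    have h5 : c * h n ≤ 1 := by nlinarith
    rw [dist_comm (q n) (z n)] at h1
    rw [hdistz n] at h1
    linarith [h1, h2 ▸ h3]
  obtain ⟨qt, hqtK, φ, hφ, hconv⟩ :=
    ((isCompact_closedBall z₀ (D + 2)).inter_left hAcl).tendsto_subseq hqbound
  -- h (φ n) tends to 0
  have htend0 : Tendsto (fun n => h (φ n)) atTop (𝓝 0) := by
    have hup : ∀ n : ℕ, h (φ n) ≤ ε * (1 / (n + 1)) := by
      intro n
      have : h (φ n) ≤ ε / (φ n + 1) := hle (φ n)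
      have hmono : (ε / (φ n + 1) : ℝ) ≤ ε / (n + 1) := by
        apply div_le_div_of_nonneg_left hεpos.le (by positivity)
        have h1 : n ≤ φ n := hφ.le_apply
        have h2 : (n:ℝ) ≤ (φ n : ℝ) := by exact_mod_cast h1
        linarith
      calc h (φ n) ≤ ε / (n + 1) := le_trans this hmono
      _ = ε * (1 / (n+1)) := by ring
    have hlow : ∀ n : ℕ, (0:ℝ) ≤ h (φ n) := fun n => (hpos (φ n)).le
    have htnd : Tendsto (fun n : ℕ => ε * (1 / ((n:ℝ) + 1))) atTop (𝓝 0) := by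
      have := tendsto_one_div_add_atTop_nhds_zero_nat.const_mul ε
      simpa using this
    exact tendsto_of_tendsto_of_tendsto_of_le_of_le tendsto_const_nhds htnd hlow hup
  -- qt = q₀
  have hdistle : dist z₀ qt ≤ D := by
    have hev : ∀ n, dist z₀ (q (φ n)) ≤ D + (c + 1) * h (φ n) := by
      intro n
      have h1 : dist z₀ (q (φ n)) ≤ dist z₀ (z (φ n)) + dist (z (φ n)) (q (φ n)) :=
        dist_triangle _ _ _
      rw [dist_comm z₀ (z (φ n)), hdistz (φ n), ← hqd (φ n)] at h1
      have h3 := hbad (φ n)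
      linarith
    have hL : Tendsto (fun n => dist z₀ (q (φ n))) atTop (𝓝 (dist z₀ qt)) :=
      tendsto_const_nhds.dist hconv
    have hR : Tendsto (fun n => D + (c+1) * h (φ n)) atTop (𝓝 (D + (c+1)*0)) :=
      tendsto_const_nhds.add (htend0.const_mul _)
    have := le_of_tendsto_of_tendsto hL hR (Eventually.of_forall hev)
    simpa using this
  have hdistge : D ≤ dist z₀ qt := infDist_le_dist_of_mem hqtK.1
  have hqt : qt = q₀ := by
    have huniq := hreach z₀ hlt
    exact huniq.unique ⟨hqtK.1, le_antisymm hdistle hdistge⟩ ⟨hq₀, hdq⟩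
  -- per-n inner product inequality
  have hP : ∀ n, ((inner ℝ (z₀ - q n) (z₀ - q₀) : ℝ)) < c * D ^ 2 := by
    intro n
    set J := (inner ℝ (z₀ - q n) (z₀ - q₀) : ℝ) with hJ
    have hDne : D ≠ 0 := ne_of_gt h0
    have hnormstep : ‖(h n / D) • (z₀ - q₀)‖ = h n := by
      rw [norm_smul, hnormz0q0, Real.norm_eq_abs, abs_of_pos (div_pos (hpos n) h0)]
      field_simp
    have hexp : ‖z n - q n‖ ^ 2
        = ‖z₀ - q n‖ ^ 2 + 2 * ((h n / D) * J) + (h n) ^ 2 := by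
      have hzz : z n - q n = (z₀ - q n) + (h n / D) • (z₀ - q₀) := by
        simp only [hz]; abel
      rw [hzz, norm_add_sq_real, real_inner_smul_right, hnormstep]
    have hlt1 : ‖z n - q n‖ ^ 2 < (D + c * h n) ^ 2 := by
      have h1 : ‖z n - q n‖ = Metric.infDist (z n) A := by
        rw [← dist_eq_norm]; exact (hqd n).symm
      have h2 := hbad n
      have h3 : (0:ℝ) ≤ ‖z n - q n‖ := norm_nonneg _
      nlinarith
    have hge : D ^ 2 ≤ ‖z₀ - q n‖ ^ 2 := by
      have h1 : D ≤ ‖z₀ - q n‖ := by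
        rw [← dist_eq_norm]; exact infDist_le_dist_of_mem (hqA n)
      nlinarith [norm_nonneg (z₀ - q n), h0]
    have e1 : ‖z₀ - q n‖ ^ 2 + 2 * ((h n / D) * J) + (h n) ^ 2 < (D + c * h n) ^ 2 := by
      rw [← hexp]; exact hlt1
    have e3 : (0:ℝ) ≤ (1 - c^2) * (h n)^2 :=
      mul_nonneg (by nlinarith) (sq_nonneg _)
    have e2 : 2 * ((h n / D) * J) < 2*c*D*(h n) := by nlinarith [e1, hge, e3]
    have hkey : (h n / D) * J < (h n / D) * (c * D ^ 2) := by
      have hrhs : (h n / D) * (c * D ^ 2) = c*D*(h n) := by field_simp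
      rw [hrhs]; linarith
    exact lt_of_mul_lt_mul_left hkey (le_of_lt (div_pos (hpos n) h0))
  -- limit contradiction
  have hinnertend : Tendsto (fun n => (inner ℝ (z₀ - q (φ n)) (z₀ - q₀) : ℝ)) atTop
      (𝓝 (inner ℝ (z₀ - qt) (z₀ - q₀) : ℝ)) := by
    exact Tendsto.inner ((tendsto_const_nhds (x := z₀)).sub hconv) tendsto_const_nhds
  rw [hqt] at hinnertend
  have hlimle : ((inner ℝ (z₀ - q₀) (z₀ - q₀) : ℝ)) ≤ c * D ^ 2 :=
    le_of_tendsto hinnertend (Eventually.of_forall fun n => (hP (φ n)).le)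
  rw [real_inner_self_eq_norm_sq, hnormz0q0] at hlimle
  nlinarith [h0, hlimle, mul_pos h0 h0, hc1]



set_option maxHeartbeats 1000000 in
private lemma grow_s13 {d : ℕ} {A : Set (EuclideanSpace ℝ (Fin d))} (hAne : A.Nonempty)
    (hAcl : IsClosed A) {τ : ℝ}
    (hreach : ∀ z : EuclideanSpace ℝ (Fin d), Metric.infDist z A < τ →
      ∃! p, p ∈ A ∧ dist z p = Metric.infDist z A)
    (u : EuclideanSpace ℝ (Fin d)) (hm0 : 0 < Metric.infDist u A) {t : ℝ}
    (ht1 : Metric.infDist u A < t) (ht2 : t < τ) :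
    ∃ ξ, dist ξ u ≤ t - Metric.infDist u A ∧ t ≤ Metric.infDist ξ A := by
  set m := Metric.infDist u A with hm
  set R := t - m with hRdef
  have hR : 0 < R := by simp [hRdef]; linarith
  -- Step A : for every c < 1 we can grow the distance to m + c * R within the ball
  have stepA : ∀ c : ℝ, 0 ≤ c → c < 1 →
      ∃ ξ, dist ξ u ≤ R ∧ m + c * R ≤ Metric.infDist ξ A := by
    intro c hc0 hc1
    set T : Set ℝ := {ρ : ℝ | ρ ∈ Set.Icc 0 R ∧
      ∃ ξ, dist ξ u ≤ ρ ∧ m + c * ρ ≤ Metric.infDist ξ A} with hT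
    have hT0 : (0:ℝ) ∈ T := by
      refine ⟨⟨le_refl 0, hR.le⟩, u, by simp, by simp [hm]⟩
    have hTne : T.Nonempty := ⟨0, hT0⟩
    have hTbdd : BddAbove T := ⟨R, fun ρ hρ => hρ.1.2⟩
    set ρs := sSup T with hρs
    have hρ0 : 0 ≤ ρs := le_csSup hTbdd hT0
    have hρR : ρs ≤ R := csSup_le hTne (fun ρ hρ => hρ.1.2)
    obtain ⟨s, hsmono, hstend, hsT⟩ := exists_seq_tendsto_sSup hTne hTbdd
    choose ξ hξd hξi using fun n => (hsT n).2
    have hξball : ∀ n, ξ n ∈ closedBall u ρs := by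
      intro n
      exact mem_closedBall.mpr (le_trans (hξd n) (le_csSup hTbdd (hsT n)))
    obtain ⟨ξt, hξtB, φ, hφ, hconv⟩ := (isCompact_closedBall u ρs).tendsto_subseq hξball
    have hstendφ : Tendsto (fun n => s (φ n)) atTop (𝓝 ρs) :=
      hstend.comp hφ.tendsto_atTop
    have hinf : m + c * ρs ≤ Metric.infDist ξt A := by
      have hL : Tendsto (fun n => m + c * s (φ n)) atTop (𝓝 (m + c * ρs)) :=
        tendsto_const_nhds.add (hstendφ.const_mul c)
      have hRt : Tendsto (fun n => Metric.infDist (ξ (φ n)) A) atTop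
          (𝓝 (Metric.infDist ξt A)) :=
        ((continuous_infDist_pt A).tendsto ξt).comp hconv
      exact le_of_tendsto_of_tendsto hL hRt
        (Eventually.of_forall fun n => hξi (φ n))
    have hρT : ρs ∈ T :=
      ⟨⟨hρ0, hρR⟩, ξt, mem_closedBall.mp hξtB, hinf⟩
    rcases eq_or_lt_of_le hρR with heq | hlt'
    · refine ⟨ξt, ?_, ?_⟩
      · rw [← heq]; exact mem_closedBall.mp hξtB
      · rw [← heq]; exact hinf
    · exfalso
      set σ := Metric.infDist ξt A with hσ
      have hσm : m + c * ρs ≤ σ := hinf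
      have hσpos : 0 < σ := by nlinarith
      have hστ : σ < τ := by
        have h1 : σ ≤ m + dist ξt u := infDist_le_infDist_add_dist
        have h2 : dist ξt u ≤ ρs := mem_closedBall.mp hξtB
        have : ρs < R := hlt'
        simp only [hRdef] at this
        linarith
      obtain ⟨qq, hqqA, hqqd⟩ := hAcl.exists_infDist_eq_dist hAne ξt
      obtain ⟨h₀, hh₀pos, hstep⟩ :=
        keystep hAne hAcl hreach ξt qq hqqA hqqd.symm hσpos hστ hc0 hc1
      set hh := min h₀ (R - ρs) with hhh
      have hhpos : 0 < hh := lt_min hh₀pos (by linarith)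
      set ξ' := ξt + (hh / σ) • (ξt - qq) with hξ'
      have hgrow : σ + c * hh ≤ Metric.infDist ξ' A :=
        hstep hh hhpos (min_le_left _ _)
      have hdξ' : dist ξ' ξt = hh := by
        rw [hξ', dist_eq_norm, add_sub_cancel_left, norm_smul, Real.norm_eq_abs,
          abs_of_pos (div_pos hhpos hσpos)]
        have : ‖ξt - qq‖ = σ := by rw [← dist_eq_norm]; exact hqqd.symm ▸ rfl
        rw [this]
        field_simp
      have hmemT : ρs + hh ∈ T := by
        refine ⟨⟨by linarith, by linarith [min_le_right h₀ (R - ρs)]⟩, ξ', ?_, ?_⟩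
        · calc dist ξ' u ≤ dist ξ' ξt + dist ξt u := dist_triangle _ _ _
            _ ≤ hh + ρs := by
                rw [hdξ']
                linarith [mem_closedBall.mp hξtB]
            _ = ρs + hh := by ring
        · calc m + c * (ρs + hh) = (m + c * ρs) + c * hh := by ring
            _ ≤ σ + c * hh := by linarith
            _ ≤ Metric.infDist ξ' A := hgrow
      have := le_csSup hTbdd hmemT
      linarith
  -- Step B : pass to the limit c → 1
  set cs : ℕ → ℝ := fun n => 1 - 1 / ((n:ℝ) + 1) with hcs
  have hcs0 : ∀ n, 0 ≤ cs n := by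
    intro n
    show (0:ℝ) ≤ 1 - 1 / ((n:ℝ) + 1)
    rw [sub_nonneg, div_le_one (by positivity)]
    have : (0:ℝ) ≤ (n:ℝ) := Nat.cast_nonneg n
    linarith
  have hcs1 : ∀ n, cs n < 1 := by
    intro n
    show (1:ℝ) - 1 / ((n:ℝ) + 1) < 1
    have h1 : (0:ℝ) < 1 / ((n:ℝ) + 1) := by positivity
    linarith
  have hsel := fun n => stepA (cs n) (hcs0 n) (hcs1 n)
  choose ζ hζd hζi using hsel
  have hζball : ∀ n, ζ n ∈ closedBall u R := fun n => mem_closedBall.mpr (hζd n)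
  obtain ⟨ξ, hξB, φ, hφ, hconv⟩ := (isCompact_closedBall u R).tendsto_subseq hζball
  refine ⟨ξ, mem_closedBall.mp hξB, ?_⟩
  have hcstend : Tendsto (fun n => m + cs (φ n) * R) atTop (𝓝 (m + 1 * R)) := by
    have h1 : Tendsto cs atTop (𝓝 1) := by
      have := tendsto_one_div_add_atTop_nhds_zero_nat (𝕜 := ℝ)
      have h2 := tendsto_const_nhds (x := (1:ℝ)) (f := atTop (α := ℕ))
      simpa [hcs] using h2.sub this
    exact tendsto_const_nhds.add (((h1.comp hφ.tendsto_atTop)).mul_const R)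
  have hRt : Tendsto (fun n => Metric.infDist (ζ (φ n)) A) atTop
      (𝓝 (Metric.infDist ξ A)) :=
    ((continuous_infDist_pt A).tendsto ξ).comp hconv
  have := le_of_tendsto_of_tendsto hcstend hRt
    (Eventually.of_forall fun n => hζi (φ n))
  simpa [hRdef] using this

set_option maxHeartbeats 1000000 in
private lemma federer_ball {d : ℕ} {A : Set (EuclideanSpace ℝ (Fin d))} (hAne : A.Nonempty)
    (hAcl : IsClosed A) {τ : ℝ} (hτ : 0 < τ)
    (hreach : ∀ z : EuclideanSpace ℝ (Fin d), Metric.infDist z A < τ →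
      ∃! p, p ∈ A ∧ dist z p = Metric.infDist z A)
    (u p : EuclideanSpace ℝ (Fin d)) (hpA : p ∈ A)
    (hpd : dist u p = Metric.infDist u A)
    (hm0 : 0 < Metric.infDist u A) (hmτ : Metric.infDist u A < τ) :
    ∀ a ∈ A, τ ≤ ‖a - (p + (τ / Metric.infDist u A) • (u - p))‖ := by
  set m := Metric.infDist u A with hm
  intro a ha
  set J := (inner ℝ (u - p) (a - p) : ℝ) with hJ
  have hnormup : ‖u - p‖ = m := by rw [← dist_eq_norm]; exact hpd
  have step1 : ∀ t', m ≤ t' → t' < τ → 2 * t' * J ≤ m * ‖a - p‖ ^ 2 := by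
    intro t' ht'm ht'τ
    rcases eq_or_lt_of_le ht'm with heq | hlt'
    · -- t' = m
      have h1 : m ≤ ‖a - u‖ := by
        rw [← norm_sub_rev u a, ← dist_eq_norm]
        exact infDist_le_dist_of_mem ha
      have h2 : ‖a - u‖ ^ 2 = ‖a - p‖ ^ 2 - 2 * J + m ^ 2 := by
        have hau : a - u = (a - p) - (u - p) := by abel
        rw [hau, norm_sub_sq_real, hnormup, real_inner_comm]
      have h3 : m ^ 2 ≤ ‖a - u‖ ^ 2 := by nlinarith [norm_nonneg (a - u), hm0]
      have h4 : 2 * J ≤ ‖a - p‖ ^ 2 := by nlinarith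
      rw [← heq]
      nlinarith [hm0]
    · -- m < t'
      obtain ⟨ξ, hξd, hξi⟩ := grow_s13 hAne hAcl hreach u hm0 hlt' ht'τ
      have hd1 : t' ≤ dist ξ p := le_trans hξi (infDist_le_dist_of_mem hpA)
      have hd2 : dist ξ p ≤ dist ξ u + m := by
        calc dist ξ p ≤ dist ξ u + dist u p := dist_triangle _ _ _
          _ = dist ξ u + m := by rw [hpd]
      have hd3 : dist ξ u = t' - m := le_antisymm hξd (by linarith)
      have hd4 : dist ξ p = t' := le_antisymm (by linarith [hd2, hd3.le]) hd1
      -- SameRay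
      have hnr : ‖(ξ - u) + (u - p)‖ = ‖ξ - u‖ + ‖u - p‖ := by
        have h5 : (ξ - u) + (u - p) = ξ - p := by abel
        rw [h5, ← dist_eq_norm, ← dist_eq_norm, ← dist_eq_norm, hd4, hd3, hpd]
        ring
      have hsr : SameRay ℝ (ξ - u) (u - p) := sameRay_iff_norm_add.mpr hnr
      have hne1 : ξ - u ≠ 0 := by
        intro hcon
        have : ‖ξ - u‖ = 0 := by rw [hcon]; simp
        rw [← dist_eq_norm, hd3] at this
        linarith
      have hne2 : u - p ≠ 0 := by
        intro hcon
        have : ‖u - p‖ = 0 := by rw [hcon]; simp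
        rw [hnormup] at this
        linarith
      obtain ⟨r₁, r₂, hr₁, hr₂, hreq⟩ := hsr.exists_pos hne1 hne2
      have hξeq : ξ - u = ((t' - m)/m) • (u - p) := by
        have h6 : ξ - u = (r₂ / r₁) • (u - p) := by
          have hcg := congrArg (fun w : EuclideanSpace ℝ (Fin d) => (r₁⁻¹ : ℝ) • w) hreq
          simp only [smul_smul] at hcg
          rw [inv_mul_cancel₀ (ne_of_gt hr₁), one_smul] at hcg
          rw [hcg, div_eq_inv_mul]
        have h7 : ‖ξ - u‖ = (r₂ / r₁) * m := by
          rw [h6, norm_smul, Real.norm_eq_abs, abs_of_pos (div_pos hr₂ hr₁), hnormup]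
        rw [← dist_eq_norm, hd3] at h7
        have h8 : r₂ / r₁ = (t' - m)/m := by
          field_simp at h7 ⊢
          nlinarith [h7]
        rw [h6, h8]
      have hξea : ξ = p + (t'/m) • (u - p) := by
        have h6' : ξ = u + ((t' - m)/m) • (u - p) := by
          rw [← hξeq]; abel
        rw [h6']
        have hsplit : (t'/m) • (u - p) = (1:ℝ) • (u - p) + ((t' - m)/m) • (u - p) := by
          rw [← add_smul]
          congr 1
          field_simp; ring
        rw [hsplit, one_smul]
        abel
      -- distance to a
      have hda : t' ≤ ‖a - (p + (t'/m) • (u - p))‖ := by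
        rw [← hξea, ← norm_sub_rev, ← dist_eq_norm]
        exact le_trans hξi (infDist_le_dist_of_mem ha)
      have hsq : ‖a - (p + (t'/m) • (u - p))‖ ^ 2
          = ‖a - p‖ ^ 2 - 2 * ((t'/m) * J) + t' ^ 2 := by
        have h9 : a - (p + (t'/m) • (u - p)) = (a - p) - (t'/m) • (u - p) := by abel
        rw [h9, norm_sub_sq_real, real_inner_smul_right, norm_smul, Real.norm_eq_abs,
          abs_of_pos (div_pos (lt_trans hm0 hlt') hm0), hnormup, real_inner_comm]
        rw [← hJ]
        have : t'/m * m = t' := by field_simp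
        rw [this]
      have h10 : t' ^ 2 ≤ ‖a - (p + (t'/m) • (u - p))‖ ^ 2 := by
        nlinarith [hda, norm_nonneg (a - (p + (t'/m) • (u - p)))]
      have h11 : 2 * ((t'/m) * J) ≤ ‖a - p‖ ^ 2 := by nlinarith [hsq, h10]
      have h12 : (0:ℝ) < m := hm0
      have : 2 * ((t'/m) * J) * m = 2 * t' * J := by field_simp
      nlinarith [mul_le_mul_of_nonneg_right h11 h12.le]
  -- step 2 : extend to τ
  have step2 : 2 * τ * J ≤ m * ‖a - p‖ ^ 2 := by
    by_cases hJpos : J ≤ 0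
    · have h1 : 2 * τ * J ≤ 0 := by nlinarith [hτ]
      have h2 : 0 ≤ m * ‖a - p‖ ^ 2 := by positivity
      linarith
    · push_neg at hJpos
      by_contra hcon
      push_neg at hcon
      set β := m * ‖a - p‖ ^ 2 / (2 * J) with hβ
      have hβτ : β < τ := by
        rw [hβ, div_lt_iff₀ (by linarith)]
        linarith [hcon]
      have hβm : m ≤ β := by
        rw [hβ, le_div_iff₀ (by linarith)]
        have := step1 m (le_refl m) hmτ
        linarith
      have ht'm : m ≤ (β + τ)/2 := by linarith
      have ht'τ : (β + τ)/2 < τ := by linarith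
      have := step1 ((β + τ)/2) ht'm ht'τ
      have hβeq : β * (2 * J) = m * ‖a - p‖ ^ 2 := by
        rw [hβ]; field_simp
      nlinarith [hJpos]
  -- conclude
  have hsq : ‖a - (p + (τ/m) • (u - p))‖ ^ 2
      = ‖a - p‖ ^ 2 - 2 * ((τ/m) * J) + τ ^ 2 := by
    have h9 : a - (p + (τ/m) • (u - p)) = (a - p) - (τ/m) • (u - p) := by abel
    rw [h9, norm_sub_sq_real, real_inner_smul_right, norm_smul, Real.norm_eq_abs,
      abs_of_pos (div_pos hτ hm0), hnormup, real_inner_comm]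
    rw [← hJ]
    have : τ/m * m = τ := by field_simp
    rw [this]
  have h13 : 2 * ((τ/m) * J) ≤ ‖a - p‖ ^ 2 := by
    have h14 : 2 * ((τ/m) * J) * m = 2 * τ * J := by field_simp
    nlinarith [step2, hm0]
  have h15 : τ ^ 2 ≤ ‖a - (p + (τ/m) • (u - p))‖ ^ 2 := by nlinarith [hsq]
  nlinarith [norm_nonneg (a - (p + (τ/m) • (u - p))), hτ]



private lemma scalar_ineq {tt ww Q S : ℝ} (hw : 0 < ww) (hwt : ww ≤ tt)
    (hQS : Q ≤ S) (hw2 : ww ^ 2 = S) : (Q + S) / ww ≤ tt + Q / tt := by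
  have ht : 0 < tt := lt_of_lt_of_le hw hwt
  have hQtw : Q ≤ tt * ww := by nlinarith
  have h1 : tt + Q / tt = (tt * tt + Q) / tt := by field_simp
  rw [h1, div_le_div_iff₀ hw ht]
  nlinarith [mul_nonneg (sub_nonneg.mpr hwt) (sub_nonneg.mpr hQtw)]


set_option maxHeartbeats 1000000 in
/-- Refined bound on `‖x − π_A(u)‖²` under the additional hypothesis
`Σ λ_i (‖x_i − u‖² + 2τ d_A(x_i) − d_A(x_i)²) ≤ ‖x − u‖² + 2τ d_A(x) − d_A(x)²`. -/
theorem stmt13 (d k : ℕ) (A : Set (EuclideanSpace ℝ (Fin d))) (hAne : A.Nonempty)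
    (hAcl : IsClosed A) (τ : ℝ) (hτ : 0 < τ)
    (hreach : ∀ z : EuclideanSpace ℝ (Fin d), Metric.infDist z A < τ →
      ∃! p, p ∈ A ∧ dist z p = Metric.infDist z A)
    (x' : Fin k → EuclideanSpace ℝ (Fin d)) (hx' : ∀ i, Metric.infDist (x' i) A < τ)
    (lam : Fin k → ℝ) (hlam : ∀ i, lam i ∈ Set.Icc (0 : ℝ) 1) (hsum : ∑ i, lam i = 1)
    (u : EuclideanSpace ℝ (Fin d)) (hu : u = ∑ i, lam i • x' i)
    (x : EuclideanSpace ℝ (Fin d)) (hx : Metric.infDist x A < τ)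
    (hclose : ∀ i, ‖x - x' i‖ < Real.sqrt ((τ - Metric.infDist x A) ^ 2 +
      (τ - Metric.infDist (x' i) A) ^ 2))
    (hextra : (∑ i, lam i * (‖x' i - u‖ ^ 2 + 2 * τ * Metric.infDist (x' i) A -
        Metric.infDist (x' i) A ^ 2)) ≤
      ‖x - u‖ ^ 2 + 2 * τ * Metric.infDist x A - Metric.infDist x A ^ 2) :
    ∀ p, p ∈ A → dist u p = Metric.infDist u A →
      ‖x - p‖ ^ 2 ≤
        (∑ i, lam i * (‖x' i - x‖ ^ 2 +
          Metric.infDist (x' i) A * (2 * τ - Metric.infDist (x' i) A))) -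
        ((τ - Metric.infDist x A) ^ 2 +
          ∑ i, lam i * ((τ - Metric.infDist (x' i) A) ^ 2 - ‖x' i - x‖ ^ 2)) *
        (τ / Real.sqrt ((∑ i, lam i * (τ - Metric.infDist (x' i) A) ^ 2) -
          ∑ i, lam i * ‖x' i - u‖ ^ 2) - 1) := by
  intro p hpA hpd
  have hlam0 : ∀ i, 0 ≤ lam i := fun i => (hlam i).1
  have hri0 : ∀ i, (0:ℝ) ≤ Metric.infDist (x' i) A := fun _ => infDist_nonneg
  -- the convex-combination identity
  have hslide : (∑ i, lam i • (x' i - u)) = (0 : EuclideanSpace ℝ (Fin d)) := by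
    simp only [smul_sub]
    rw [Finset.sum_sub_distrib, ← Finset.sum_smul, hsum, one_smul, ← hu, sub_self]
  have E1 : ∀ a : EuclideanSpace ℝ (Fin d),
      (∑ i, lam i * ‖x' i - a‖ ^ 2) = ‖u - a‖ ^ 2 + ∑ i, lam i * ‖x' i - u‖ ^ 2 := by
    intro a
    have hterm : ∀ i ∈ Finset.univ, lam i * ‖x' i - a‖ ^ 2
        = lam i * ‖x' i - u‖ ^ 2 + ((inner ℝ (lam i • (x' i - u)) (u - a) : ℝ) * 2
          + lam i * ‖u - a‖ ^ 2) := by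
      intro i _
      have hsplit : x' i - a = (x' i - u) + (u - a) := by abel
      rw [hsplit, norm_add_sq_real, real_inner_smul_left]
      ring
    rw [Finset.sum_congr rfl hterm, Finset.sum_add_distrib, Finset.sum_add_distrib,
      ← Finset.sum_mul, ← Finset.sum_mul, ← sum_inner, hslide, hsum]
    simp only [inner_zero_left, zero_mul, one_mul]
    ring
  -- abbreviations
  set A1 := ∑ i, lam i * (τ - Metric.infDist (x' i) A) ^ 2 with hA1
  set A2 := ∑ i, lam i * ‖x' i - u‖ ^ 2 with hA2
  set A3 := ∑ i, lam i * ‖x' i - x‖ ^ 2 with hA3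
  set r := Metric.infDist x A with hrdef
  set m := Metric.infDist u A with hmdef
  set S := A1 - A2 with hS
  set Q := (τ - r) ^ 2 - ‖x - u‖ ^ 2 with hQdef
  set w := Real.sqrt S with hwdef
  have hr0 : (0:ℝ) ≤ r := infDist_nonneg
  have hm0 : (0:ℝ) ≤ m := infDist_nonneg
  have hA20 : (0:ℝ) ≤ A2 := by
    rw [hA2]
    exact Finset.sum_nonneg (fun i _ => mul_nonneg (hlam0 i) (by positivity))
  have hE1x : A3 = ‖x - u‖ ^ 2 + A2 := by
    rw [hA3, hA2, E1 x, norm_sub_rev]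
  -- Q ≤ S from hextra
  have hLHSext : (∑ i, lam i * (‖x' i - u‖ ^ 2 + 2 * τ * Metric.infDist (x' i) A -
      Metric.infDist (x' i) A ^ 2)) = A2 + (τ ^ 2 - A1) := by
    have hterm : ∀ i ∈ Finset.univ, lam i * (‖x' i - u‖ ^ 2 + 2 * τ * Metric.infDist (x' i) A -
        Metric.infDist (x' i) A ^ 2)
        = lam i * ‖x' i - u‖ ^ 2 + (lam i * τ ^ 2 - lam i * (τ - Metric.infDist (x' i) A) ^ 2) := by
      intro i _
      ring
    rw [Finset.sum_congr rfl hterm, Finset.sum_add_distrib, Finset.sum_sub_distrib,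
      ← Finset.sum_mul, hsum, hA2, hA1]
    ring
  have hQS : Q ≤ S := by
    rw [hLHSext] at hextra
    have hid : ‖x - u‖ ^ 2 + 2 * τ * r - r ^ 2 = ‖x - u‖ ^ 2 + τ ^ 2 - (τ - r) ^ 2 := by ring
    rw [hid] at hextra
    rw [hQdef, hS]
    linarith
  -- strict inequality giving S > 0
  have hex : ∃ j : Fin k, 0 < lam j := by
    by_contra hno
    push_neg at hno
    have hz : ∑ i, lam i = 0 :=
      Finset.sum_eq_zero (fun i _ => le_antisymm (hno i) (hlam0 i))
    rw [hsum] at hz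
    norm_num at hz
  have hsqclose : ∀ i, ‖x' i - x‖ ^ 2 < (τ - r) ^ 2 + (τ - Metric.infDist (x' i) A) ^ 2 := by
    intro i
    have h1 := hclose i
    have hnn : (0:ℝ) ≤ (τ - r) ^ 2 + (τ - Metric.infDist (x' i) A) ^ 2 := by positivity
    have h2 := Real.sq_sqrt hnn
    have h3 := Real.sqrt_nonneg ((τ - r) ^ 2 + (τ - Metric.infDist (x' i) A) ^ 2)
    rw [norm_sub_rev]
    nlinarith [norm_nonneg (x - x' i)]
  have hstrict : A3 < (τ - r) ^ 2 + A1 := by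
    obtain ⟨j, hj⟩ := hex
    have hsumlt : (∑ i, lam i * ‖x' i - x‖ ^ 2)
        < ∑ i, lam i * ((τ - r) ^ 2 + (τ - Metric.infDist (x' i) A) ^ 2) := by
      apply Finset.sum_lt_sum
      · intro i _
        exact mul_le_mul_of_nonneg_left (hsqclose i).le (hlam0 i)
      · exact ⟨j, Finset.mem_univ j, mul_lt_mul_of_pos_left (hsqclose j) hj⟩
    have hsplit : (∑ i, lam i * ((τ - r) ^ 2 + (τ - Metric.infDist (x' i) A) ^ 2))
        = (τ - r) ^ 2 + A1 := by
      have hterm : ∀ i ∈ Finset.univ, lam i * ((τ - r) ^ 2 + (τ - Metric.infDist (x' i) A) ^ 2)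
          = lam i * (τ - r) ^ 2 + lam i * (τ - Metric.infDist (x' i) A) ^ 2 := by
        intro i _; ring
      rw [Finset.sum_congr rfl hterm, Finset.sum_add_distrib, ← Finset.sum_mul, hsum, hA1]
      ring
    rw [hA3]
    linarith [hsplit ▸ hsumlt]
  have hSpos : 0 < S := by
    have h1 : ‖x - u‖ ^ 2 + A2 < (τ - r) ^ 2 + A1 := by rw [← hE1x]; exact hstrict
    have h2 : -S < Q := by rw [hQdef, hS]; linarith
    linarith
  have hw : 0 < w := Real.sqrt_pos.mpr hSpos
  have hw2 : w ^ 2 = S := Real.sq_sqrt hSpos.le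
  clear_value A1 A2 A3 S Q w r m
  -- rewrite the goal
  have hB1 : (∑ i, lam i * (‖x' i - x‖ ^ 2 +
      Metric.infDist (x' i) A * (2 * τ - Metric.infDist (x' i) A))) = A3 + (τ ^ 2 - A1) := by
    have hterm : ∀ i ∈ Finset.univ, lam i * (‖x' i - x‖ ^ 2 +
        Metric.infDist (x' i) A * (2 * τ - Metric.infDist (x' i) A))
        = lam i * ‖x' i - x‖ ^ 2 + (lam i * τ ^ 2 - lam i * (τ - Metric.infDist (x' i) A) ^ 2) := by
      intro i _; ring
    rw [Finset.sum_congr rfl hterm, Finset.sum_add_distrib, Finset.sum_sub_distrib,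
      ← Finset.sum_mul, hsum, hA3, hA1]
    ring
  have hB2 : ((τ - r) ^ 2 + ∑ i, lam i * ((τ - Metric.infDist (x' i) A) ^ 2 - ‖x' i - x‖ ^ 2))
      = Q + S := by
    have hterm : ∀ i ∈ Finset.univ, lam i * ((τ - Metric.infDist (x' i) A) ^ 2 - ‖x' i - x‖ ^ 2)
        = lam i * (τ - Metric.infDist (x' i) A) ^ 2 - lam i * ‖x' i - x‖ ^ 2 := by
      intro i _; ring
    rw [Finset.sum_congr rfl hterm, Finset.sum_sub_distrib, ← hA1, ← hA3, hE1x, hQdef, hS]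
    ring
  rw [hB1, hB2]
  have htarg : A3 + (τ ^ 2 - A1) - (Q + S) * (τ / w - 1)
      = (τ - r) ^ 2 + τ ^ 2 - (Q + S) * τ / w := by
    rw [hE1x, hQdef, hS]
    field_simp
    ring
  rw [htarg]
  -- now the main case split
  rcases eq_or_lt_of_le hm0 with hmz | hmpos
  · -- m = 0 : p = u
    have hpu : u = p := by
      have : dist u p = 0 := by rw [hpd, ← hmz]
      exact dist_eq_zero.mp this
    have hA1le : A1 ≤ τ ^ 2 := by
      have hterm : ∀ i ∈ Finset.univ, lam i * (τ - Metric.infDist (x' i) A) ^ 2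
          ≤ lam i * τ ^ 2 := by
        intro i _
        apply mul_le_mul_of_nonneg_left _ (hlam0 i)
        nlinarith [hri0 i, hx' i]
      calc A1 = ∑ i, lam i * (τ - Metric.infDist (x' i) A) ^ 2 := hA1
        _ ≤ ∑ i, lam i * τ ^ 2 := Finset.sum_le_sum hterm
        _ = τ ^ 2 := by rw [← Finset.sum_mul, hsum, one_mul]
    have hwτ : w ≤ τ := by
      have h1 : S ≤ τ ^ 2 := by rw [hS]; linarith
      calc w = Real.sqrt S := hwdef
        _ ≤ Real.sqrt (τ ^ 2) := Real.sqrt_le_sqrt h1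
        _ = τ := Real.sqrt_sq hτ.le
    have hsc := scalar_ineq hw hwτ hQS hw2
    have hxpu : ‖x - p‖ ^ 2 = ‖x - u‖ ^ 2 := by rw [hpu]
    have hmul : τ * ((Q + S) / w) ≤ τ * (τ + Q / τ) :=
      mul_le_mul_of_nonneg_left hsc hτ.le
    have h5 : τ * (τ + Q / τ) = τ ^ 2 + Q := by field_simp
    have h6 : τ * ((Q + S) / w) = (Q + S) * τ / w := by ring
    rw [hxpu]
    have h7 : ‖x - u‖ ^ 2 = (τ - r) ^ 2 - Q := by rw [hQdef]; ring
    rw [h7]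
    linarith [hmul, h5 ▸ hmul]
  · -- m > 0
    have hmτ : m < τ := by
      have hexS : ∃ j : Fin k, 0 < lam j * ((τ - Metric.infDist (x' j) A) ^ 2 - ‖x' j - u‖ ^ 2) := by
        by_contra hno
        push_neg at hno
        have h1 : (∑ i, lam i * ((τ - Metric.infDist (x' i) A) ^ 2 - ‖x' i - u‖ ^ 2)) ≤ 0 :=
          Finset.sum_nonpos (fun i _ => hno i)
        have h2 : (∑ i, lam i * ((τ - Metric.infDist (x' i) A) ^ 2 - ‖x' i - u‖ ^ 2)) = S := by
          have hterm : ∀ i ∈ Finset.univ, lam i * ((τ - Metric.infDist (x' i) A) ^ 2 - ‖x' i - u‖ ^ 2)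
              = lam i * (τ - Metric.infDist (x' i) A) ^ 2 - lam i * ‖x' i - u‖ ^ 2 := by
            intro i _; ring
          rw [Finset.sum_congr rfl hterm, Finset.sum_sub_distrib, ← hA1, ← hA2, hS]
        rw [h2] at h1
        linarith
      obtain ⟨j, hj⟩ := hexS
      have hlamj : 0 < lam j := by
        rcases lt_or_eq_of_le (hlam0 j) with h | h
        · exact h
        · exfalso; rw [← h] at hj; simp at hj
      have hdel : ‖x' j - u‖ ^ 2 < (τ - Metric.infDist (x' j) A) ^ 2 := by
        nlinarith [hj, hlamj]
      have hnlt : ‖x' j - u‖ < τ - Metric.infDist (x' j) A := by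
        by_contra hcc
        push_neg at hcc
        nlinarith [norm_nonneg (x' j - u), hx' j]
      have h1 : Metric.infDist u A ≤ Metric.infDist (x' j) A + dist u (x' j) :=
        infDist_le_infDist_add_dist
      rw [← hmdef] at h1
      have h2 : dist u (x' j) = ‖x' j - u‖ := by rw [dist_eq_norm, norm_sub_rev]
      rw [h2] at h1
      linarith
    -- the rolling ball
    have hpd' : dist u p = Metric.infDist u A := by rw [hpd, hmdef]
    have hmpos' : 0 < Metric.infDist u A := by rw [← hmdef]; exact hmpos
    have hmτ' : Metric.infDist u A < τ := by rw [← hmdef]; exact hmτ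
    have hfb := federer_ball hAne hAcl hτ hreach u p hpA hpd' hmpos' hmτ'
    rw [← hmdef] at hfb
    set cc := p + (τ / m) • (u - p) with hcc
    have hnormup : ‖u - p‖ = m := by rw [← dist_eq_norm]; exact hpd
    have f3 : ‖u - cc‖ = τ - m := by
      have h1 : u - cc = (1 - τ / m) • (u - p) := by
        rw [hcc, sub_smul, one_smul]
        abel
      rw [h1, norm_smul, Real.norm_eq_abs, hnormup]
      have h2 : (1:ℝ) - τ / m < 0 := by
        rw [sub_neg]
        rw [lt_div_iff₀ hmpos]
        linarith
      rw [abs_of_neg h2]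
      field_simp; ring
    have fdist : ∀ z : EuclideanSpace ℝ (Fin d),
        τ - Metric.infDist z A ≤ ‖z - cc‖ := by
      intro z
      obtain ⟨pz, hpzA, hpzd⟩ := hAcl.exists_infDist_eq_dist hAne z
      have h1 : τ ≤ ‖pz - cc‖ := hfb pz hpzA
      have h2 : ‖pz - cc‖ ≤ ‖pz - z‖ + ‖z - cc‖ := by
        have : pz - cc = (pz - z) + (z - cc) := by abel
        rw [this]; exact norm_add_le _ _
      have h3 : ‖pz - z‖ = Metric.infDist z A := by
        rw [← dist_eq_norm, dist_comm, dist_eq_norm, ← dist_eq_norm]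
        exact hpzd.symm
      linarith
    have f1 : τ - r ≤ ‖x - cc‖ := by rw [hrdef]; exact fdist x
    have hSle : S ≤ (τ - m) ^ 2 := by
      have hA1c : A1 ≤ ∑ i, lam i * ‖x' i - cc‖ ^ 2 := by
        rw [hA1]
        apply Finset.sum_le_sum
        intro i _
        apply mul_le_mul_of_nonneg_left _ (hlam0 i)
        have h1 := fdist (x' i)
        have h2 : (0:ℝ) ≤ τ - Metric.infDist (x' i) A := by linarith [hx' i]
        exact pow_le_pow_left₀ h2 h1 2
      have hE1c : (∑ i, lam i * ‖x' i - cc‖ ^ 2) = ‖u - cc‖ ^ 2 + A2 := E1 cc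
      rw [hE1c, f3] at hA1c
      rw [hS]
      linarith
    have hwt : w ≤ τ - m := by
      calc w = Real.sqrt S := hwdef
        _ ≤ Real.sqrt ((τ - m) ^ 2) := Real.sqrt_le_sqrt hSle
        _ = τ - m := Real.sqrt_sq (by linarith)
    -- key inequality
    set I := (inner ℝ (x - p) (u - p) : ℝ) with hI
    have id1 : ‖x - u‖ ^ 2 = ‖x - p‖ ^ 2 - 2 * I + m ^ 2 := by
      have h1 : x - u = (x - p) - (u - p) := by abel
      rw [h1, norm_sub_sq_real, hnormup]
    have id2 : ‖x - cc‖ ^ 2 = ‖x - p‖ ^ 2 - 2 * ((τ / m) * I) + τ ^ 2 := by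
      have h1 : x - cc = (x - p) - (τ / m) • (u - p) := by rw [hcc]; abel
      rw [h1, norm_sub_sq_real, real_inner_smul_right, norm_smul, Real.norm_eq_abs,
        abs_of_pos (div_pos hτ hmpos), hnormup]
      have h2 : (τ / m * m) = τ := by field_simp
      rw [h2]
    have hf1sq : (τ - r) ^ 2 ≤ ‖x - cc‖ ^ 2 := by
      have h2 : (0:ℝ) ≤ τ - r := by linarith [hx]
      exact pow_le_pow_left₀ h2 f1 2
    have h2I : 2 * ((τ / m) * I) ≤ ‖x - p‖ ^ 2 + τ ^ 2 - (τ - r) ^ 2 := by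
      linarith only [id2, hf1sq]
    have h2I' : m * (2 * ((τ / m) * I)) = 2 * τ * I := by field_simp
    have h2Im : 2 * τ * I ≤ m * (‖x - p‖ ^ 2 + τ ^ 2 - (τ - r) ^ 2) := by
      have := mul_le_mul_of_nonneg_left h2I hm0
      rw [h2I'] at this
      exact this
    have h2Ieq : 2 * I = ‖x - p‖ ^ 2 + m ^ 2 - ‖x - u‖ ^ 2 := by linarith only [id1]
    have h4 : τ * (2 * I) = τ * (‖x - p‖ ^ 2 + m ^ 2 - ‖x - u‖ ^ 2) := by
      rw [h2Ieq]
    have keyineq : (τ - m) * ‖x - p‖ ^ 2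
        ≤ τ * ‖x - u‖ ^ 2 - τ * m ^ 2 + m * τ ^ 2 - m * (τ - r) ^ 2 := by
      linarith only [h4, h2Im]
    have hsc := scalar_ineq hw hwt hQS hw2
    have hident : (τ - m) * ((τ - r) ^ 2 + τ ^ 2 - (Q + S) * τ / w)
        = (τ * ‖x - u‖ ^ 2 - τ * m ^ 2 + m * τ ^ 2 - m * (τ - r) ^ 2)
          + τ * (τ - m) * (((τ - m) + Q / (τ - m)) - (Q + S) / w) := by
      rw [hQdef]
      have hmτne : τ - m ≠ 0 := by intro hcon; linarith
      field_simp
      ring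
    have hscpos : 0 ≤ τ * (τ - m) * (((τ - m) + Q / (τ - m)) - (Q + S) / w) := by
      apply mul_nonneg
      · apply mul_nonneg hτ.le
        linarith only [hmτ]
      · linarith only [hsc]
    have hfin : (τ - m) * ‖x - p‖ ^ 2 ≤ (τ - m) * ((τ - r) ^ 2 + τ ^ 2 - (Q + S) * τ / w) := by
      rw [hident]
      linarith only [keyineq, hscpos]
    have hmτpos : 0 < τ - m := by linarith
    exact le_of_mul_le_mul_left hfin hmτpos
end
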